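/- arXiv:2303.17270 — 6 statements merged into one kernel-verified Lean document; each statement's English description precedes it below -/
import Mathlib

section
/- Let d, n, k ≥ 1, let Σ = Fin n, Q = Fin k. Let X_k ⊂ {0,1,…,k}^{ℤ^d} be the subshift of configurations having at most one nonzero coordinate, let X_{n,k} = Σ^{ℤ^d} × X_k, and let Y = Σ^{ℤ^d} × {0^{ℤ^d}} ⊂ X_{n,k}. Identify each moving-head (ℤ^d,n,k)-Turing machine with the self-map of X_{n,k} that fixes every point of Y and acts on X_{n,k} ∖ Y through the bijection sending (x,q,v) ∈ Σ^{ℤ^d} × Q × ℤ^d to the pair (x,y) with y_v = q and y_u = 0 for u ≠ v. Then TM(ℤ^d,n,k) = { φ ∈ End(X_{n,k}) : φ restricted to Y is the identity and φ^{−1}(Y) = Y }, and RTM(ℤ^d,n,k) = { φ ∈ Aut(X_{n,k}) : φ restricted to Y is the identity }. -/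
/-- The shift action on configurations: `(shiftC v x) u = x (u - v)`. -/
def shiftC {d : ℕ} {A : Type*} (v : Fin d → ℤ) (x : (Fin d → ℤ) → A) : (Fin d → ℤ) → A :=
  fun u => x (u - v)

/-- The moving-head space `Σ^{ℤ^d} × Q × ℤ^d`. -/
abbrev Head (d n k : ℕ) : Type :=
  ((Fin d → ℤ) → Fin n) × Fin k × (Fin d → ℤ)

/-- `T` is a moving-head `(ℤ^d,n,k)`-Turing machine. -/
def IsTM (d n k : ℕ) (T : Head d n k → Head d n k) : Prop :=
  ∃ (Fi Fo : Finset (Fin d → ℤ))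
    (f : ((Fin d → ℤ) → Fin n) × Fin k → ((Fin d → ℤ) → Fin n) × Fin k × (Fin d → ℤ)),
    (∀ (x y : (Fin d → ℤ) → Fin n) (q : Fin k),
        (∀ u ∈ Fi, x u = y u) → f (x, q) = f (y, q)) ∧
    ∀ (x : (Fin d → ℤ) → Fin n) (q : Fin k) (v : Fin d → ℤ),
      T (x, q, v) =
        ((fun u => if u - v ∈ Fo then (f (shiftC (-v) x, q)).1 (u - v) else x u),
         (f (shiftC (-v) x, q)).2.1,
         v + (f (shiftC (-v) x, q)).2.2)

/-- The ambient space `Σ^{ℤ^d} × (Q ∪ {0})^{ℤ^d}`, where `Q ∪ {0}` is `Fin (k+1)`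
(`0` meaning "no head"). -/
abbrev Amb (d n k : ℕ) : Type :=
  ((Fin d → ℤ) → Fin n) × ((Fin d → ℤ) → Fin (k + 1))

/-- The subshift `X_{n,k}`: configurations whose head layer has at most one nonzero
coordinate. -/
def Xnk (d n k : ℕ) : Set (Amb d n k) :=
  {p | ∀ u w : Fin d → ℤ, p.2 u ≠ 0 → p.2 w ≠ 0 → u = w}

/-- The headless part `Y = Σ^{ℤ^d} × {0^{ℤ^d}}`. -/
def Yset (d n k : ℕ) : Set (Amb d n k) :=
  {p | p.2 = fun _ => 0}

/-- The identification of a moving-head configuration `(x, q, v)` with the point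
`(x, y) ∈ X_{n,k}` where `y v = q` (nonzero, via `Fin.succ`) and `y u = 0` for `u ≠ v`. -/
def embedHead (d n k : ℕ) (c : Head d n k) : Amb d n k :=
  (c.1, fun u => if u = c.2.2 then Fin.succ c.2.1 else 0)

lemma embedHead_mem (d n k : ℕ) (c : Head d n k) : embedHead d n k c ∈ Xnk d n k := by
  intro u w hu hw
  by_cases h1 : u = c.2.2 <;> by_cases h2 : w = c.2.2 <;>
    simp_all [embedHead]

lemma shift_mem_Xnk (d n k : ℕ) {p : Amb d n k} (hp : p ∈ Xnk d n k) (v : Fin d → ℤ) :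
    (shiftC v p.1, shiftC v p.2) ∈ Xnk d n k := by
  intro u w hu hw
  have h := hp (u - v) (w - v) hu hw
  exact sub_left_inj.mp h

/-- The diagonal shift action on the subshift `X_{n,k}`. -/
def shiftXnk (d n k : ℕ) (v : Fin d → ℤ) (p : Xnk d n k) : Xnk d n k :=
  ⟨(shiftC v p.1.1, shiftC v p.1.2), shift_mem_Xnk d n k p.2 v⟩


/-!
Away from `Y`, the subshift `X_{n,k}` is exactly the image of the moving-head configurations
under `toXnk`, so a self-map fixing `Y` pointwise with `φ⁻¹(Y) = Y` is the same thing as a head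
map `T`. By compactness (Curtis–Hedlund–Lyndon), a continuous shift-commuting `φ` reads each cell
through a fixed finite window; as `φ` fixes `Y`, cells far from the head keep their symbol and get
no head, so the window seen from the head is the local rule of a machine. Conversely a machine
rewrites only cells near its head and moves the head by one of finitely many displacements, which
gives a finite window for the induced map, also at headless points. Reversibility transfers
because `T ↦ inducedMap T` respects composition.
-/
open Topology Set

section Window

variable {ι K A : Type*} {Z : ι → Type*} [∀ i, TopologicalSpace (Z i)]
  [∀ i, DiscreteTopology (Z i)] [TopologicalSpace K] [TopologicalSpace A]
  {e : K → ∀ i, Z i}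

theorem cylinder_mem_nhds (he : Continuous e) (S : Finset ι) (p : K) :
    {q | ∀ i ∈ S, e q i = e p i} ∈ 𝓝 p := by
  have h : (S : Set ι).pi (fun i => {e p i}) ∈ 𝓝 (e p) :=
    set_pi_mem_nhds S.finite_toSet fun i _ => isOpen_discrete _ |>.mem_nhds rfl
  simpa [Set.preimage, Set.mem_pi] using he.continuousAt.preimage_mem_nhds h

theorem Topology.IsInducing.exists_finset_eq_of_continuous [CompactSpace K]
    [DiscreteTopology A] (he : IsInducing e) {g : K → A} (hg : Continuous g) :
    ∃ S : Finset ι, ∀ p q, (∀ i ∈ S, e p i = e q i) → g p = g q := by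
  have hloc : ∀ p, ∃ I : Finset ι, ∀ q, (∀ i ∈ I, e q i = e p i) → g q = g p := by
    intro p
    have hfib : g ⁻¹' {g p} ∈ 𝓝 p := hg.continuousAt.preimage_mem_nhds (by simp)
    rw [he.nhds_eq_comap, Filter.mem_comap, nhds_pi] at hfib
    obtain ⟨V, hV, hVsub⟩ := hfib
    obtain ⟨I, t, ht, hIt⟩ := Filter.mem_pi'.1 hV
    exact ⟨I, fun q hq => hVsub (hIt fun i hi => hq i hi ▸ mem_of_mem_nhds (ht i))⟩
  classical
  choose I hI using hloc
  obtain ⟨t, -, ht⟩ := isCompact_univ.elim_nhds_subcover _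
    fun p _ => cylinder_mem_nhds he.continuous (I p) p
  refine ⟨t.biUnion I, fun p q hpq => ?_⟩
  obtain ⟨r, hr, hpr⟩ := mem_iUnion₂.1 (ht (mem_univ p))
  have hqr : ∀ i ∈ I r, e q i = e r i := fun i hi =>
    (hpq i (Finset.mem_biUnion.2 ⟨r, hr, hi⟩)).symm.trans (hpr i hi)
  rw [hI r p hpr, hI r q hqr]

theorem continuous_of_finset_eq (he : Continuous e) {g : K → A} (S : Finset ι)
    (hg : ∀ p q, (∀ i ∈ S, e p i = e q i) → g p = g q) : Continuous g :=
  ((IsLocallyConstant.iff_eventually_eq g).2 fun p =>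
    Filter.mem_of_superset (cylinder_mem_nhds he S p) fun q hq => hg q p hq).continuous

end Window

theorem Set.finite_range_of_eq_of_eqOn {ι α β γ : Type*} [Finite α] [Nonempty α] [Finite β]
    (F : (ι → α) × β → γ) (I : Finset ι)
    (hF : ∀ x y b, (∀ i ∈ I, x i = y i) → F (x, b) = F (y, b)) : (Set.range F).Finite := by
  let restrict : (ι → α) → (I → α) := fun x i => x i
  refine (Set.finite_range fun r : (I → α) × β =>
    F (Function.invFun restrict r.1, r.2)).subset ?_
  rintro _ ⟨⟨x, b⟩, rfl⟩
  exact ⟨(restrict x, b), hF _ _ _ fun i hi =>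
    congrFun (Function.invFun_eq (f := restrict) ⟨x, rfl⟩) ⟨i, hi⟩⟩

open scoped Pointwise

section Subshift

variable {d n k : ℕ}

lemma shiftC_shiftC {A : Type*} (v w : Fin d → ℤ) (x : (Fin d → ℤ) → A) :
    shiftC v (shiftC w x) = shiftC (v + w) x := by
  funext u
  simp only [shiftC, sub_sub]

lemma shiftC_apply {A : Type*} (v : Fin d → ℤ) (x : (Fin d → ℤ) → A) (u : Fin d → ℤ) :
    shiftC v x u = x (u - v) := rfl

lemma shiftC_zero {A : Type*} (x : (Fin d → ℤ) → A) : shiftC 0 x = x := by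
  funext u
  simp only [shiftC, sub_zero]

def cell (p : Amb d n k) (u : Fin d → ℤ) : Fin n × Fin (k + 1) := (p.1 u, p.2 u)

lemma isInducing_cell : IsInducing fun p : Xnk d n k => cell (p : Amb d n k) := by
  have hback : Continuous fun z : (Fin d → ℤ) → Fin n × Fin (k + 1) =>
      ((fun u => (z u).1, fun u => (z u).2) : Amb d n k) := by fun_prop
  exact IsInducing.of_comp (by unfold cell; fun_prop) hback IsInducing.subtypeVal

lemma isClosed_Xnk : IsClosed (Xnk d n k) := by
  simp only [Xnk, Set.ofPred_forall]
  exact isClosed_iInter fun u => isClosed_iInter fun w =>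
    (isClosed_discrete {z : Fin (k + 1) × Fin (k + 1) | z.1 ≠ 0 → z.2 ≠ 0 → u = w}).preimage
      (f := fun p : Amb d n k => (p.2 u, p.2 w)) (by fun_prop)

instance : CompactSpace (Xnk d n k) :=
  isCompact_iff_compactSpace.mp isClosed_Xnk.isCompact

lemma cell_shiftXnk (v : Fin d → ℤ) (p : Xnk d n k) (u : Fin d → ℤ) :
    cell (shiftXnk d n k v p : Amb d n k) u = cell (p : Amb d n k) (u - v) := rfl

def HasWindow (φ : Xnk d n k → Xnk d n k) (S : Finset (Fin d → ℤ)) : Prop :=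
  ∀ (p q : Xnk d n k) u,
    (∀ s ∈ S, cell (p : Amb d n k) (s + u) = cell (q : Amb d n k) (s + u)) →
    cell (φ p : Amb d n k) u = cell (φ q : Amb d n k) u

lemma exists_hasWindow_of_continuous {φ : Xnk d n k → Xnk d n k} (hc : Continuous φ)
    (hcomm : ∀ v p, φ (shiftXnk d n k v p) = shiftXnk d n k v (φ p)) :
    ∃ S, HasWindow φ S := by
  obtain ⟨S, hS⟩ := isInducing_cell.exists_finset_eq_of_continuous
    (g := fun p => cell (φ p : Amb d n k) 0)
    ((continuous_apply 0).comp (isInducing_cell.continuous.comp hc))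
  have hcell : ∀ r u,
      cell (φ r : Amb d n k) u = cell (φ (shiftXnk d n k (-u) r) : Amb d n k) 0 :=
    fun r u => by rw [hcomm, cell_shiftXnk, zero_sub, neg_neg]
  refine ⟨S, fun p q u hpq => ?_⟩
  rw [hcell p, hcell q]
  exact hS _ _ fun s hs => by simpa only [cell_shiftXnk, sub_neg_eq_add] using hpq s hs

lemma HasWindow.continuous {φ : Xnk d n k → Xnk d n k} {W : Finset (Fin d → ℤ)}
    (hW : HasWindow φ W) : Continuous φ := by
  rw [isInducing_cell.continuous_iff]
  exact continuous_pi fun u => continuous_of_finset_eq isInducing_cell.continuous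
    (W.image (· + u)) fun p q hpq => hW p q u fun s hs => hpq _ (Finset.mem_image_of_mem _ hs)

lemma HasWindow.cell_eq_of_headless {φ : Xnk d n k → Xnk d n k} {S : Finset (Fin d → ℤ)}
    (hS : HasWindow φ S) (hY : ∀ p : Xnk d n k, (p : Amb d n k) ∈ Yset d n k → φ p = p)
    (p : Xnk d n k) (u : Fin d → ℤ) (hp : ∀ s ∈ S, (p : Amb d n k).2 (s + u) = 0) :
    cell (φ p : Amb d n k) u = ((p : Amb d n k).1 u, 0) := by
  let p₀ : Xnk d n k := ⟨((p : Amb d n k).1, fun _ => 0), fun _ _ h => absurd rfl h⟩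
  rw [hS p p₀ u fun s hs => Prod.ext rfl (hp s hs), hY p₀ rfl]
  rfl

def toXnk (c : Head d n k) : Xnk d n k := ⟨embedHead d n k c, embedHead_mem d n k c⟩

def shiftHead (v : Fin d → ℤ) (c : Head d n k) : Head d n k := (shiftC v c.1, c.2.1, v + c.2.2)

lemma cell_toXnk (c : Head d n k) (u : Fin d → ℤ) :
    cell (toXnk c : Amb d n k) u = (c.1 u, if u = c.2.2 then c.2.1.succ else 0) := rfl

lemma toXnk_head_ne_zero (c : Head d n k) : (toXnk c : Amb d n k).2 c.2.2 ≠ 0 := by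
  simp [toXnk, embedHead]

lemma toXnk_not_mem_Yset (c : Head d n k) : (toXnk c : Amb d n k) ∉ Yset d n k :=
  fun h => toXnk_head_ne_zero c (congrFun h c.2.2)

lemma snd_eq_of_toXnk_snd_eq {c c' : Head d n k}
    (h : (toXnk c : Amb d n k).2 = (toXnk c' : Amb d n k).2) : c.2 = c'.2 := by
  have hc := congrFun h c.2.2
  by_cases hv : c.2.2 = c'.2.2
  · simp only [toXnk, embedHead, hv, if_true] at hc
    exact Prod.ext (Fin.succ_injective _ hc) hv
  · simp [toXnk, embedHead, hv] at hc

lemma toXnk_injective : Function.Injective (toXnk (d := d) (n := n) (k := k)) := fun _ _ h =>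
  Prod.ext (congrArg (fun p : Xnk d n k => (p : Amb d n k).1) h)
    (snd_eq_of_toXnk_snd_eq (congrArg (fun p : Xnk d n k => (p : Amb d n k).2) h))

lemma toXnk_of_ne_zero (p : Xnk d n k) {v : Fin d → ℤ} (hv : (p : Amb d n k).2 v ≠ 0) :
    toXnk ((p : Amb d n k).1, ((p : Amb d n k).2 v).pred hv, v) = p := by
  refine Subtype.ext (Prod.ext rfl (funext fun u => ?_))
  show (if u = v then _ else 0) = _
  split_ifs with hu
  · rw [hu, Fin.succ_pred]
  · by_contra hpu
    exact hu (p.2 u v (Ne.symm hpu) hv)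

lemma exists_toXnk_eq_iff (p : Xnk d n k) :
    (∃ c, toXnk c = p) ↔ (p : Amb d n k) ∉ Yset d n k := by
  refine ⟨fun ⟨c, hc⟩ => hc ▸ toXnk_not_mem_Yset c, fun hp => ?_⟩
  obtain ⟨v, hv⟩ : ∃ v, (p : Amb d n k).2 v ≠ 0 := by
    by_contra! h
    exact hp (funext h)
  exact ⟨_, toXnk_of_ne_zero p hv⟩

lemma exists_toXnk_eq_or_mem_Yset (p : Xnk d n k) :
    (∃ c, toXnk c = p) ∨ (p : Amb d n k) ∈ Yset d n k := by
  rw [exists_toXnk_eq_iff]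
  exact em' _

lemma shiftXnk_toXnk (v : Fin d → ℤ) (c : Head d n k) :
    shiftXnk d n k v (toXnk c) = toXnk (shiftHead v c) := by
  refine Subtype.ext (Prod.ext rfl (funext fun u => ?_))
  show (if u - v = c.2.2 then _ else 0) = (if u = v + c.2.2 then _ else 0)
  simp only [sub_eq_iff_eq_add']
  rfl

lemma shiftXnk_mem_Yset (v : Fin d → ℤ) {p : Xnk d n k} (hp : (p : Amb d n k) ∈ Yset d n k) :
    (shiftXnk d n k v p : Amb d n k) ∈ Yset d n k :=
  funext fun u => congrFun hp (u - v)

end Subshift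

section Machines

variable {d n k : ℕ}

open Classical in
noncomputable def inducedMap (T : Head d n k → Head d n k) (p : Xnk d n k) : Xnk d n k :=
  if h : ∃ c, toXnk c = p then toXnk (T h.choose) else p

lemma inducedMap_toXnk (T : Head d n k → Head d n k) (c : Head d n k) :
    inducedMap T (toXnk c) = toXnk (T c) := by
  have h : ∃ c', toXnk c' = toXnk c := ⟨c, rfl⟩
  rw [inducedMap, dif_pos h, toXnk_injective h.choose_spec]

lemma inducedMap_of_mem_Yset (T : Head d n k → Head d n k) {p : Xnk d n k}
    (hp : (p : Amb d n k) ∈ Yset d n k) : inducedMap T p = p :=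
  dif_neg ((exists_toXnk_eq_iff p).not_left.2 hp)

lemma eq_inducedMap {φ : Xnk d n k → Xnk d n k} {T : Head d n k → Head d n k}
    (hY : ∀ p : Xnk d n k, (p : Amb d n k) ∈ Yset d n k → φ p = p)
    (hT : ∀ c, φ (toXnk c) = toXnk (T c)) : φ = inducedMap T := by
  funext p
  rcases exists_toXnk_eq_or_mem_Yset p with ⟨c, rfl⟩ | hp
  · rw [hT, inducedMap_toXnk]
  · rw [hY p hp, inducedMap_of_mem_Yset T hp]

lemma inducedMap_id : inducedMap (id : Head d n k → Head d n k) = id :=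
  (eq_inducedMap (fun _ _ => rfl) fun _ => rfl).symm

lemma inducedMap_comp (T T' : Head d n k → Head d n k) :
    inducedMap (T ∘ T') = inducedMap T ∘ inducedMap T' :=
  (eq_inducedMap (fun p hp => by simp [inducedMap_of_mem_Yset _ hp])
    fun c => by simp [inducedMap_toXnk]).symm

lemma inducedMap_mem_Yset_iff (T : Head d n k → Head d n k) (p : Xnk d n k) :
    (inducedMap T p : Amb d n k) ∈ Yset d n k ↔ (p : Amb d n k) ∈ Yset d n k := by
  rcases exists_toXnk_eq_or_mem_Yset p with ⟨c, rfl⟩ | hp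
  · simp only [inducedMap_toXnk, toXnk_not_mem_Yset]
  · rw [inducedMap_of_mem_Yset T hp]

lemma IsTM.shiftHead_comm {T : Head d n k → Head d n k} (hT : IsTM d n k T)
    (v : Fin d → ℤ) (c : Head d n k) : T (shiftHead v c) = shiftHead v (T c) := by
  obtain ⟨-, Fo, f, -, hf⟩ := hT
  obtain ⟨x, q, w⟩ := c
  have hx : shiftC (-(v + w)) (shiftC v x) = shiftC (-w) x := by
    rw [shiftC_shiftC]
    congr 1
    abel
  simp only [shiftHead, hf, hx, add_assoc, Prod.mk.injEq, and_true]
  funext u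
  simp only [shiftC, sub_sub]

lemma inducedMap_shiftXnk {T : Head d n k → Head d n k} (hT : IsTM d n k T)
    (v : Fin d → ℤ) (p : Xnk d n k) :
    inducedMap T (shiftXnk d n k v p) = shiftXnk d n k v (inducedMap T p) := by
  rcases exists_toXnk_eq_or_mem_Yset p with ⟨c, rfl⟩ | hp
  · rw [shiftXnk_toXnk, inducedMap_toXnk, inducedMap_toXnk, hT.shiftHead_comm, shiftXnk_toXnk]
  · rw [inducedMap_of_mem_Yset T hp, inducedMap_of_mem_Yset T (shiftXnk_mem_Yset v hp)]

lemma IsTM.exists_window (hn : 1 ≤ n) {T : Head d n k → Head d n k} (hT : IsTM d n k T) :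
    ∃ Fi E : Finset (Fin d → ℤ), 0 ∈ E ∧
      (∀ c u, u - c.2.2 ∉ E →
        cell (toXnk (T c) : Amb d n k) u = cell (toXnk c : Amb d n k) u) ∧
      ∀ x y q v u, x u = y u → (∀ z ∈ Fi, x (z + v) = y (z + v)) →
        cell (toXnk (T (x, q, v)) : Amb d n k) u = cell (toXnk (T (y, q, v)) : Amb d n k) u := by
  obtain ⟨Fi, Fo, f, hloc, hf⟩ := hT
  have : Nonempty (Fin n) := ⟨⟨0, hn⟩⟩
  -- `E` must contain every possible move of the head; there are finitely many because the
  -- move depends only on the state and the tape on `Fi`.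
  have hD := Set.finite_range_of_eq_of_eqOn (fun c => (f c).2.2) Fi
    fun x y q hxy => congrArg (fun r => r.2.2) (hloc x y q hxy)
  refine ⟨Fi, insert 0 (Fo ∪ hD.toFinset), Finset.mem_insert_self _ _, ?_, ?_⟩
  · rintro ⟨x, q, v⟩ u hu
    simp only [Finset.mem_insert, Finset.mem_union, Set.Finite.mem_toFinset, not_or] at hu
    obtain ⟨huv, hFo, hD⟩ := hu
    have hmove : u ≠ v + (f (shiftC (-v) x, q)).2.2 :=
      fun h => hD ⟨(shiftC (-v) x, q), by simp [h]⟩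
    simp only [cell_toXnk, hf, if_neg hFo, if_neg hmove, if_neg (sub_ne_zero.1 huv)]
  · intro x y q v u hu hxy
    have hfxy : f (shiftC (-v) x, q) = f (shiftC (-v) y, q) :=
      hloc _ _ q fun z hz => by simpa only [shiftC, sub_neg_eq_add] using hxy z hz
    simp only [cell_toXnk, hf, hfxy, hu]

lemma cell_inducedMap_of_far {T : Head d n k → Head d n k} {E : Finset (Fin d → ℤ)}
    (hfar : ∀ c u, u - c.2.2 ∉ E →
      cell (toXnk (T c) : Amb d n k) u = cell (toXnk c : Amb d n k) u)
    (p : Xnk d n k) (u : Fin d → ℤ) (hp : ∀ v, u - v ∈ E → (p : Amb d n k).2 v = 0) :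
    cell (inducedMap T p : Amb d n k) u = cell (p : Amb d n k) u := by
  rcases exists_toXnk_eq_or_mem_Yset p with ⟨c, rfl⟩ | hY
  · rw [inducedMap_toXnk]
    exact hfar c u fun hc => toXnk_head_ne_zero c (hp _ hc)
  · rw [inducedMap_of_mem_Yset T hY]

lemma IsTM.exists_hasWindow_inducedMap (hn : 1 ≤ n) {T : Head d n k → Head d n k}
    (hT : IsTM d n k T) : ∃ W, HasWindow (inducedMap T) W := by
  obtain ⟨Fi, E, hE0, hfar, hnear⟩ := hT.exists_window hn
  let W := -E ∪ (Fi - E)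
  have h0 : (0 : Fin d → ℤ) ∈ W := Finset.mem_union_left _ (by simpa using hE0)
  have hnear' : ∀ (p q : Xnk d n k) u v, u - v ∈ E → (p : Amb d n k).2 v ≠ 0 →
      (∀ s ∈ W, cell (p : Amb d n k) (s + u) = cell (q : Amb d n k) (s + u)) →
      cell (inducedMap T p : Amb d n k) u = cell (inducedMap T q : Amb d n k) u := by
    intro p q u v hv hpv hpq
    have hpqv : (p : Amb d n k).2 v = (q : Amb d n k).2 v := by
      simpa [cell] using congrArg Prod.snd
        (hpq (-(u - v)) (Finset.mem_union_left _ (Finset.neg_mem_neg hv)))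
    have hqv : (q : Amb d n k).2 v ≠ 0 := hpqv ▸ hpv
    have hstate : ((p : Amb d n k).2 v).pred hpv = ((q : Amb d n k).2 v).pred hqv :=
      Fin.succ_injective _ (by simpa only [Fin.succ_pred] using hpqv)
    rw [← toXnk_of_ne_zero p hpv, ← toXnk_of_ne_zero q hqv, inducedMap_toXnk,
      inducedMap_toXnk, hstate]
    refine hnear _ _ _ _ _ (by simpa [cell] using congrArg Prod.fst (hpq 0 h0)) fun z hz => ?_
    have hz' := hpq (z - (u - v)) (Finset.mem_union_right _ (Finset.sub_mem_sub hz hv))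
    rw [sub_sub_eq_add_sub, sub_add_cancel] at hz'
    exact congrArg Prod.fst hz'
  refine ⟨W, fun p q u hpq => ?_⟩
  by_cases hp : ∃ v, u - v ∈ E ∧ (p : Amb d n k).2 v ≠ 0
  · obtain ⟨v, hv, hpv⟩ := hp
    exact hnear' p q u v hv hpv hpq
  by_cases hq : ∃ v, u - v ∈ E ∧ (q : Amb d n k).2 v ≠ 0
  · obtain ⟨v, hv, hqv⟩ := hq
    exact (hnear' q p u v hv hqv fun s hs => (hpq s hs).symm).symm
  push Not at hp hq
  rw [cell_inducedMap_of_far hfar p u hp, cell_inducedMap_of_far hfar q u hq]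
  simpa using hpq 0 h0

lemma IsTM.continuous_inducedMap (hn : 1 ≤ n) {T : Head d n k → Head d n k}
    (hT : IsTM d n k T) : Continuous (inducedMap T) :=
  (hT.exists_hasWindow_inducedMap hn).choose_spec.continuous

end Machines

section SlidingBlockCodes

variable {d n k : ℕ}

lemma isTM_of_shiftHead_comm (hn : 1 ≤ n) {T : Head d n k → Head d n k}
    (hshift : ∀ v c, T (shiftHead v c) = shiftHead v (T c)) (Fi Fo : Finset (Fin d → ℤ))
    (hloc : ∀ x y q, (∀ u ∈ Fi, x u = y u) →
      (T (x, q, 0)).2 = (T (y, q, 0)).2 ∧ ∀ w ∈ Fo, (T (x, q, 0)).1 w = (T (y, q, 0)).1 w)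
    (hfar : ∀ x q w, w ∉ Fo → (T (x, q, 0)).1 w = x w) :
    IsTM d n k T := by
  -- The rule's tape output is only read on `Fo`; elsewhere any symbol will do.
  refine ⟨Fi, Fo, fun c => (fun w => if w ∈ Fo then (T (c.1, c.2, 0)).1 w else ⟨0, hn⟩,
    (T (c.1, c.2, 0)).2), fun x y q hxy => ?_, fun x q v => ?_⟩
  · obtain ⟨h2, h1⟩ := hloc x y q hxy
    simp only [h2, Prod.mk.injEq, and_true]
    funext w
    split_ifs with hw
    exacts [h1 w hw, rfl]
  · have hx : (x, q, v) = shiftHead v (shiftC (-v) x, q, 0) := by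
      simp only [shiftHead, shiftC_shiftC, add_neg_cancel, add_zero, shiftC_zero]
    rw [hx, hshift]
    refine Prod.ext (funext fun u => ?_) rfl
    simp only [shiftHead, shiftC]
    split_ifs with hu
    · rfl
    · rw [hfar _ _ _ hu, shiftC_apply, sub_neg_eq_add, sub_add_cancel]

lemma exists_isTM_of_continuous (hn : 1 ≤ n) {φ : Xnk d n k → Xnk d n k} (hc : Continuous φ)
    (hcomm : ∀ v p, φ (shiftXnk d n k v p) = shiftXnk d n k v (φ p))
    (hY : ∀ p : Xnk d n k, (p : Amb d n k) ∈ Yset d n k → φ p = p)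
    (hpre : ∀ p : Xnk d n k, (φ p : Amb d n k) ∈ Yset d n k → (p : Amb d n k) ∈ Yset d n k) :
    ∃ T : Head d n k → Head d n k, IsTM d n k T ∧ ∀ c, φ (toXnk c) = toXnk (T c) := by
  choose T hT using fun c => (exists_toXnk_eq_iff (φ (toXnk c))).2
    fun h => toXnk_not_mem_Yset c (hpre _ h)
  obtain ⟨S, hS⟩ := exists_hasWindow_of_continuous hc hcomm
  -- The cell `w` of `φ (toXnk (x, q, 0))` can see the head at the origin only if `-w ∈ S`.
  have hfar : ∀ x q w, w ∉ -S → cell (toXnk (T (x, q, 0)) : Amb d n k) w = (x w, 0) := by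
    intro x q w hw
    rw [hT]
    refine hS.cell_eq_of_headless hY _ w fun s hs => if_neg fun h => hw ?_
    rw [eq_neg_of_add_eq_zero_right h]
    exact Finset.neg_mem_neg hs
  have hnear : ∀ x y q, (∀ u ∈ S - S, x u = y u) → ∀ w ∈ -S,
      cell (toXnk (T (x, q, 0)) : Amb d n k) w = cell (toXnk (T (y, q, 0)) : Amb d n k) w := by
    intro x y q hxy w hw
    rw [hT, hT]
    refine hS _ _ w fun s hs => Prod.ext (hxy _ ?_) rfl
    simpa [← sub_eq_add_neg] using Finset.sub_mem_sub hs (Finset.mem_neg'.1 hw)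
  refine ⟨T, isTM_of_shiftHead_comm hn (fun v c => toXnk_injective ?_) (S - S) (-S)
    (fun x y q hxy => ⟨snd_eq_of_toXnk_snd_eq (funext fun w => ?_), fun w hw => ?_⟩)
    fun x q w hw => congrArg Prod.fst (hfar x q w hw), fun c => (hT c).symm⟩
  · rw [hT, ← shiftXnk_toXnk, hcomm, ← hT, shiftXnk_toXnk]
  · by_cases hw : w ∈ -S
    · exact congrArg Prod.snd (hnear x y q hxy w hw)
    · exact (congrArg Prod.snd (hfar x q w hw)).trans (congrArg Prod.snd (hfar y q w hw)).symm
  · exact congrArg Prod.fst (hnear x y q hxy w hw)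

end SlidingBlockCodes

section Inverses

variable {d n k : ℕ}

lemma eq_self_of_leftInverse {φ ψ : Xnk d n k → Xnk d n k}
    (hY : ∀ p : Xnk d n k, (p : Amb d n k) ∈ Yset d n k → φ p = p) (h : ψ ∘ φ = id)
    (p : Xnk d n k) (hp : (p : Amb d n k) ∈ Yset d n k) : ψ p = p := by
  simpa only [Function.comp_apply, hY p hp, id] using congrFun h p

lemma mem_Yset_of_leftInverse {φ ψ : Xnk d n k → Xnk d n k}
    (hY : ∀ p : Xnk d n k, (p : Amb d n k) ∈ Yset d n k → ψ p = p) (h : ψ ∘ φ = id)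
    (p : Xnk d n k) (hp : (φ p : Amb d n k) ∈ Yset d n k) : (p : Amb d n k) ∈ Yset d n k := by
  have hp' : φ p = p := (hY _ hp).symm.trans (congrFun h p)
  rwa [hp'] at hp

lemma comp_eq_id_of_toXnk {φ ψ : Xnk d n k → Xnk d n k} {T T' : Head d n k → Head d n k}
    (hφ : ∀ c, φ (toXnk c) = toXnk (T c)) (hψ : ∀ c, ψ (toXnk c) = toXnk (T' c))
    (h : φ ∘ ψ = id) : T ∘ T' = id :=
  funext fun c => toXnk_injective (by rw [Function.comp_apply, ← hφ, ← hψ]; exact congrFun h _)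

end Inverses

theorem TM_RTM_eq_End_Aut_fixing_Y_general
    (d n k : ℕ) (hn : 1 ≤ n) :
    (∀ φ : Xnk d n k → Xnk d n k,
      ((Continuous φ ∧ ∀ (v : Fin d → ℤ) (p : Xnk d n k),
          φ (shiftXnk d n k v p) = shiftXnk d n k v (φ p)) ∧
        (∀ p : Xnk d n k, (p : Amb d n k) ∈ Yset d n k → φ p = p) ∧
        {p : Xnk d n k | ((φ p : Xnk d n k) : Amb d n k) ∈ Yset d n k} =
          {p : Xnk d n k | (p : Amb d n k) ∈ Yset d n k})
      ↔
      (∃ T : Head d n k → Head d n k, IsTM d n k T ∧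
        (∀ p : Xnk d n k, (p : Amb d n k) ∈ Yset d n k → φ p = p) ∧
        ∀ c : Head d n k,
          φ ⟨embedHead d n k c, embedHead_mem d n k c⟩ =
            ⟨embedHead d n k (T c), embedHead_mem d n k (T c)⟩))
    ∧
    (∀ φ : Xnk d n k → Xnk d n k,
      ((∃ ψ : Xnk d n k → Xnk d n k,
          Continuous φ ∧ Continuous ψ ∧
          (∀ (v : Fin d → ℤ) (p : Xnk d n k),
            φ (shiftXnk d n k v p) = shiftXnk d n k v (φ p)) ∧
          (∀ (v : Fin d → ℤ) (p : Xnk d n k),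
            ψ (shiftXnk d n k v p) = shiftXnk d n k v (ψ p)) ∧
          φ ∘ ψ = id ∧ ψ ∘ φ = id) ∧
        (∀ p : Xnk d n k, (p : Amb d n k) ∈ Yset d n k → φ p = p))
      ↔
      (∃ T : Head d n k → Head d n k,
        (IsTM d n k T ∧ ∃ T' : Head d n k → Head d n k,
          IsTM d n k T' ∧ T ∘ T' = id ∧ T' ∘ T = id) ∧
        (∀ p : Xnk d n k, (p : Amb d n k) ∈ Yset d n k → φ p = p) ∧
        ∀ c : Head d n k,
          φ ⟨embedHead d n k c, embedHead_mem d n k c⟩ =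
            ⟨embedHead d n k (T c), embedHead_mem d n k (T c)⟩)) := by
  refine ⟨fun φ => ⟨?_, ?_⟩, fun φ => ⟨?_, ?_⟩⟩
  · rintro ⟨⟨hc, hcomm⟩, hY, hpre⟩
    obtain ⟨T, hT, hφT⟩ :=
      exists_isTM_of_continuous hn hc hcomm hY fun p => (Set.ext_iff.1 hpre p).1
    exact ⟨T, hT, hY, hφT⟩
  · rintro ⟨T, hT, hY, hφT⟩
    obtain rfl := eq_inducedMap hY hφT
    exact ⟨⟨hT.continuous_inducedMap hn, inducedMap_shiftXnk hT⟩, hY,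
      Set.ext (inducedMap_mem_Yset_iff T)⟩
  · rintro ⟨⟨ψ, hφc, hψc, hφs, hψs, hφψ, hψφ⟩, hY⟩
    have hψY := eq_self_of_leftInverse hY hψφ
    obtain ⟨T, hT, hφT⟩ :=
      exists_isTM_of_continuous hn hφc hφs hY (mem_Yset_of_leftInverse hψY hψφ)
    obtain ⟨T', hT', hψT'⟩ :=
      exists_isTM_of_continuous hn hψc hψs hψY (mem_Yset_of_leftInverse hY hφψ)
    exact ⟨T, ⟨hT, T', hT', comp_eq_id_of_toXnk hφT hψT' hφψ,
      comp_eq_id_of_toXnk hψT' hφT hψφ⟩, hY, hφT⟩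
  · rintro ⟨T, ⟨hT, T', hT', hTT', hT'T⟩, hY, hφT⟩
    obtain rfl := eq_inducedMap hY hφT
    refine ⟨⟨inducedMap T', hT.continuous_inducedMap hn, hT'.continuous_inducedMap hn,
      inducedMap_shiftXnk hT, inducedMap_shiftXnk hT', ?_, ?_⟩, hY⟩
    · rw [← inducedMap_comp, hTT', inducedMap_id]
    · rw [← inducedMap_comp, hT'T, inducedMap_id]

/-- Under the identification of moving-head Turing machines with
self-maps of `X_{n,k}` fixing `Y` pointwise and acting on `X_{n,k} ∖ Y` through
`embedHead`, the monoid `TM(ℤ^d,n,k)` is exactly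
`{φ ∈ End(X_{n,k}) : φ|_Y = id and φ⁻¹(Y) = Y}`, and the group `RTM(ℤ^d,n,k)` is
exactly `{φ ∈ Aut(X_{n,k}) : φ|_Y = id}`. -/
theorem TM_RTM_eq_End_Aut_fixing_Y
    (d n k : ℕ) (hd : 1 ≤ d) (hn : 1 ≤ n) (hk : 1 ≤ k) :
    (∀ φ : Xnk d n k → Xnk d n k,
      ((Continuous φ ∧ ∀ (v : Fin d → ℤ) (p : Xnk d n k),
          φ (shiftXnk d n k v p) = shiftXnk d n k v (φ p)) ∧
        (∀ p : Xnk d n k, (p : Amb d n k) ∈ Yset d n k → φ p = p) ∧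
        {p : Xnk d n k | ((φ p : Xnk d n k) : Amb d n k) ∈ Yset d n k} =
          {p : Xnk d n k | (p : Amb d n k) ∈ Yset d n k})
      ↔
      (∃ T : Head d n k → Head d n k, IsTM d n k T ∧
        (∀ p : Xnk d n k, (p : Amb d n k) ∈ Yset d n k → φ p = p) ∧
        ∀ c : Head d n k,
          φ ⟨embedHead d n k c, embedHead_mem d n k c⟩ =
            ⟨embedHead d n k (T c), embedHead_mem d n k (T c)⟩))
    ∧
    (∀ φ : Xnk d n k → Xnk d n k,
      ((∃ ψ : Xnk d n k → Xnk d n k,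
          Continuous φ ∧ Continuous ψ ∧
          (∀ (v : Fin d → ℤ) (p : Xnk d n k),
            φ (shiftXnk d n k v p) = shiftXnk d n k v (φ p)) ∧
          (∀ (v : Fin d → ℤ) (p : Xnk d n k),
            ψ (shiftXnk d n k v p) = shiftXnk d n k v (ψ p)) ∧
          φ ∘ ψ = id ∧ ψ ∘ φ = id) ∧
        (∀ p : Xnk d n k, (p : Amb d n k) ∈ Yset d n k → φ p = p))
      ↔
      (∃ T : Head d n k → Head d n k,
        (IsTM d n k T ∧ ∃ T' : Head d n k → Head d n k,
          IsTM d n k T' ∧ T ∘ T' = id ∧ T' ∘ T = id) ∧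
        (∀ p : Xnk d n k, (p : Amb d n k) ∈ Yset d n k → φ p = p) ∧
        ∀ c : Head d n k,
          φ ⟨embedHead d n k c, embedHead_mem d n k c⟩ =
            ⟨embedHead d n k (T c), embedHead_mem d n k (T c)⟩)) :=
  TM_RTM_eq_End_Aut_fixing_Y_general d n k hn
end

section
/- Let d, n, k ≥ 1 and let T be a moving-tape (ℤ^d,n,k)-Turing machine. The following are equivalent: (1) T is injective; (2) T is surjective; (3) T has a moving-tape inverse, i.e. T ∈ RTM_fix(ℤ^d,n,k); (4) μ(T^{−1}(A)) = μ(A) for every Borel set A ⊆ Σ^{ℤ^d} × Q; (5) μ(T(A)) = μ(A) for every Borel set A ⊆ Σ^{ℤ^d} × Q. -/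
/-!
A moving-tape machine can be normalised so that it reads and rewrites one finite window `E`:
on the cylinder fixed by the content of `E` it writes a pattern on `E`, changes state and shifts
the tape. It therefore maps every cylinder whose window contains `E` onto a cylinder whose window
is a translate of the old one, so it preserves the uniform measure of these cylinders, which form
a π-system generating the Borel sets. An injective machine is a closed embedding of the compact
tape space, hence `μ (T '' A) = μ A` for all `A`; its range is closed of full measure, and every
nonempty open set has positive measure, so it is onto, and then `μ (T ⁻¹' A) = μ A` as well.
A surjective machine has a section which is itself a machine: for each content of the finite
window from which the output cylinders are read, choose one output cylinder containing it and
run the machine backwards there. The section is injective, hence surjective, hence a two-sided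
inverse.
-/

open MeasureTheory

/-- The moving-tape space `Σ^{ℤ^d} × Q`. -/
abbrev Tape (d n k : ℕ) : Type := ((Fin d → ℤ) → Fin n) × Fin k

/-- `T` is a moving-tape `(ℤ^d,n,k)`-Turing machine. -/
def IsTapeTM (d n k : ℕ) (T : Tape d n k → Tape d n k) : Prop :=
  ∃ (Fi Fo : Finset (Fin d → ℤ))
    (f : Tape d n k → ((Fin d → ℤ) → Fin n) × Fin k × (Fin d → ℤ)),
    (∀ (x y : (Fin d → ℤ) → Fin n) (q : Fin k),
        (∀ u ∈ Fi, x u = y u) → f (x, q) = f (y, q)) ∧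
    ∀ (x : (Fin d → ℤ) → Fin n) (q : Fin k),
      T (x, q) =
        (shiftC (-(f (x, q)).2.2) (fun u => if u ∈ Fo then (f (x, q)).1 u else x u),
         (f (x, q)).2.1)

open Set Function
open scoped ENNReal

theorem Continuous.surjective_of_measure_range_eq {X Y : Type*} [TopologicalSpace X]
    [CompactSpace X] [TopologicalSpace Y] [T2Space Y] [MeasurableSpace Y] [OpensMeasurableSpace Y]
    (μ : Measure Y) [IsFiniteMeasure μ] [μ.IsOpenPosMeasure] {f : X → Y} (hf : Continuous f)
    (h : μ (range f) = μ univ) : Surjective f := by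
  have hclosed : IsClosed (range f) := (isCompact_range hf).isClosed
  have hnull : μ (range f)ᶜ = 0 := by
    rw [measure_compl hclosed.measurableSet (measure_ne_top μ _), h, tsub_self]
  rw [← range_eq_univ, ← compl_empty_iff]
  exact (hclosed.isOpen_compl.measure_eq_zero_iff μ).1 hnull

namespace TapeTM

variable {d n k : ℕ}

def cyl (F : Finset (Fin d → ℤ)) (p : (Fin d → ℤ) → Fin n) (q : Fin k) : Set (Tape d n k) :=
  {y | (∀ u ∈ F, y.1 u = p u) ∧ y.2 = q}

theorem mem_cyl_self (F : Finset (Fin d → ℤ)) (z : Tape d n k) : z ∈ cyl F z.1 z.2 :=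
  ⟨fun _ _ => rfl, rfl⟩

theorem cyl_eq_of_mem {F : Finset (Fin d → ℤ)} {p : (Fin d → ℤ) → Fin n} {q : Fin k}
    {z : Tape d n k} (hz : z ∈ cyl F p q) : cyl F p q = cyl F z.1 z.2 := by
  ext y
  simp only [cyl, mem_ofPred_eq, hz.2]
  exact and_congr_left' ⟨fun h u hu => (h u hu).trans (hz.1 u hu).symm,
    fun h u hu => (h u hu).trans (hz.1 u hu)⟩

theorem cyl_anti {F G : Finset (Fin d → ℤ)} (h : F ⊆ G) (p : (Fin d → ℤ) → Fin n) (q : Fin k) :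
    cyl G p q ⊆ cyl F p q :=
  fun _ hy => ⟨fun u hu => hy.1 u (h hu), hy.2⟩

theorem cyl_union (F G : Finset (Fin d → ℤ)) (p : (Fin d → ℤ) → Fin n) (q : Fin k) :
    cyl (F ∪ G) p q = cyl F p q ∩ cyl G p q := by
  ext y
  simp only [cyl, mem_ofPred_eq, mem_inter_iff, Finset.mem_union]
  grind

theorem isOpen_cyl (F : Finset (Fin d → ℤ)) (p : (Fin d → ℤ) → Fin n) (q : Fin k) :
    IsOpen (cyl F p q) := by
  have hcoord : ∀ u, IsOpen {y : Tape d n k | y.1 u = p u} :=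
    fun u => (isOpen_discrete {p u}).preimage (f := fun y : Tape d n k => y.1 u) (by fun_prop)
  have hstate : IsOpen {y : Tape d n k | y.2 = q} :=
    (isOpen_discrete {q}).preimage (f := fun y : Tape d n k => y.2) (by fun_prop)
  convert (isOpen_biInter_finset (s := F) fun u _ => hcoord u).inter hstate using 1
  ext y
  simp [cyl]

theorem exists_cyl_subset {U : Set (Tape d n k)} (hU : IsOpen U) {z : Tape d n k} (hz : z ∈ U) :
    ∃ F, cyl F z.1 z.2 ⊆ U := by
  obtain ⟨A, B, hA, -, hzA, hzB, hAB⟩ := isOpen_prod_iff.mp hU z.1 z.2 hz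
  obtain ⟨F, V, hV, hFV⟩ := isOpen_pi_iff.mp hA z.1 hzA
  refine ⟨F, fun y hy => hAB ⟨hFV fun u hu => ?_, hy.2 ▸ hzB⟩⟩
  rw [Finset.mem_coe] at hu
  rw [hy.1 u hu]
  exact (hV u hu).2

def cylsOver (E : Finset (Fin d → ℤ)) : Set (Set (Tape d n k)) :=
  {s | ∃ G, ∃ z : Tape d n k, E ⊆ G ∧ s = cyl G z.1 z.2}

theorem isPiSystem_cylsOver (E : Finset (Fin d → ℤ)) :
    IsPiSystem (cylsOver (n := n) (k := k) E) := by
  rintro _ ⟨G, z, hG, rfl⟩ _ ⟨G', z', -, rfl⟩ ⟨w, hw, hw'⟩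
  refine ⟨G ∪ G', w, hG.trans Finset.subset_union_left, ?_⟩
  rw [cyl_eq_of_mem hw, cyl_eq_of_mem hw', cyl_union]

theorem isTopologicalBasis_cylsOver (E : Finset (Fin d → ℤ)) :
    TopologicalSpace.IsTopologicalBasis (cylsOver (n := n) (k := k) E) := by
  refine TopologicalSpace.isTopologicalBasis_of_isOpen_of_nhds ?_ fun z U hz hU => ?_
  · rintro _ ⟨G, z, -, rfl⟩
    exact isOpen_cyl G z.1 z.2
  · obtain ⟨F, hF⟩ := exists_cyl_subset hU hz
    exact ⟨cyl (F ∪ E) z.1 z.2, ⟨F ∪ E, z, Finset.subset_union_right, rfl⟩, mem_cyl_self _ z,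
      (cyl_anti Finset.subset_union_left _ _).trans hF⟩

abbrev Window (E : Finset (Fin d → ℤ)) (n k : ℕ) : Type := (E → Fin n) × Fin k

def window (E : Finset (Fin d → ℤ)) (z : Tape d n k) : Window E n k := (fun u => z.1 u, z.2)

theorem window_eq_iff_mem_cyl {E : Finset (Fin d → ℤ)} {z w : Tape d n k} :
    window E z = window E w ↔ z ∈ cyl E w.1 w.2 := by
  simp [window, cyl, funext_iff, Prod.ext_iff]

theorem continuous_window (E : Finset (Fin d → ℤ)) : Continuous (window (n := n) (k := k) E) := by
  unfold window
  fun_prop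

def extend [NeZero n] {E : Finset (Fin d → ℤ)} (i : Window E n k) : Tape d n k :=
  (fun u => if h : u ∈ E then i.1 ⟨u, h⟩ else 0, i.2)

theorem window_extend [NeZero n] {E : Finset (Fin d → ℤ)} (i : Window E n k) :
    window E (extend i) = i := by
  simp [window, extend]

theorem extend_window_fst_of_mem [NeZero n] {E : Finset (Fin d → ℤ)} (z : Tape d n k)
    {u : Fin d → ℤ} (hu : u ∈ E) : (extend (window E z)).1 u = z.1 u := by
  simp [extend, window, hu]

section Uniform

variable [MeasurableSpace (Tape d n k)] {μ : Measure (Tape d n k)}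

theorem measurableSpace_eq_generateFrom_cylsOver [BorelSpace (Tape d n k)]
    (E : Finset (Fin d → ℤ)) :
    ‹MeasurableSpace (Tape d n k)› = MeasurableSpace.generateFrom (cylsOver E) :=
  BorelSpace.measurable_eq.trans (isTopologicalBasis_cylsOver E).borel_eq_generateFrom

def IsUniform (μ : Measure (Tape d n k)) : Prop :=
  ∀ F p q, μ (cyl F p q) = 1 / ((n : ℝ≥0∞) ^ F.card * k)

theorem IsUniform.measure_cyl_ne_zero (hμ : IsUniform μ) (F : Finset (Fin d → ℤ))
    (p : (Fin d → ℤ) → Fin n) (q : Fin k) : μ (cyl F p q) ≠ 0 := by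
  rw [hμ]
  simp [ENNReal.mul_eq_top]

theorem IsUniform.measure_cyl_ne_top (hμ : IsUniform μ) (F : Finset (Fin d → ℤ))
    (p : (Fin d → ℤ) → Fin n) (q : Fin k) : μ (cyl F p q) ≠ ⊤ := by
  have hn : (n : ℝ≥0∞) ≠ 0 := by exact_mod_cast (p 0).pos.ne'
  have hk : (k : ℝ≥0∞) ≠ 0 := by exact_mod_cast q.pos.ne'
  rw [hμ]
  simp [hn, hk]

theorem IsUniform.isOpenPosMeasure (hμ : IsUniform μ) : μ.IsOpenPosMeasure := by
  refine ⟨fun U hU ⟨z, hz⟩ hzero => ?_⟩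
  obtain ⟨F, hF⟩ := exists_cyl_subset hU hz
  exact hμ.measure_cyl_ne_zero F z.1 z.2 (measure_mono_null hF hzero)

theorem IsUniform.isFiniteMeasure [NeZero n] (hμ : IsUniform μ) : IsFiniteMeasure μ := by
  have hcover : (univ : Set (Tape d n k)) = ⋃ q, cyl ∅ 0 q := by
    ext z
    simp [cyl]
  refine ⟨?_⟩
  rw [hcover]
  exact (measure_iUnion_fintype_le μ _).trans_lt
    (ENNReal.sum_lt_top.2 fun q _ => (hμ.measure_cyl_ne_top ∅ 0 q).lt_top)

end Uniform

-- Normal form of a moving-tape machine, with a single window `E` both read and overwritten.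
structure LocalRule (d n k : ℕ) where
  E : Finset (Fin d → ℤ)
  pat : Window E n k → (Fin d → ℤ) → Fin n
  st : Window E n k → Fin k
  vec : Window E n k → Fin d → ℤ

namespace LocalRule

def toFun (R : LocalRule d n k) (z : Tape d n k) : Tape d n k :=
  (shiftC (-R.vec (window R.E z)) (fun u => if u ∈ R.E then R.pat (window R.E z) u else z.1 u),
    R.st (window R.E z))

instance : CoeFun (LocalRule d n k) fun _ => Tape d n k → Tape d n k := ⟨toFun⟩

variable (R : LocalRule d n k)

theorem apply_fst (z : Tape d n k) (u : Fin d → ℤ) :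
    (R z).1 u =
      if u + R.vec (window R.E z) ∈ R.E then R.pat (window R.E z) (u + R.vec (window R.E z))
      else z.1 (u + R.vec (window R.E z)) := by
  simp [toFun, shiftC]

theorem apply_snd (z : Tape d n k) : (R z).2 = R.st (window R.E z) := rfl

theorem isTapeTM : IsTapeTM d n k R := by
  refine ⟨R.E, R.E, fun z => (R.pat (window R.E z), R.st (window R.E z), R.vec (window R.E z)),
    fun x y q h => ?_, fun x q => rfl⟩
  dsimp only
  rw [window_eq_iff_mem_cyl (z := (x, q)) (w := (y, q)) |>.2 ⟨h, rfl⟩]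

theorem _root_.IsTapeTM.exists_localRule [NeZero n] {T : Tape d n k → Tape d n k}
    (hT : IsTapeTM d n k T) : ∃ R : LocalRule d n k, ⇑R = T := by
  obtain ⟨Fi, Fo, f, hf, hTf⟩ := hT
  set E := Fi ∪ Fo
  have hlocal : ∀ z : Tape d n k, f z = f (extend (window E z)) := fun z =>
    hf z.1 _ z.2 fun u hu => (extend_window_fst_of_mem z (Finset.mem_union_left _ hu)).symm
  refine ⟨⟨E, fun i u => if u ∈ Fo then (f (extend i)).1 u else (extend i).1 u,
    fun i => (f (extend i)).2.1, fun i => (f (extend i)).2.2⟩, funext fun z => ?_⟩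
  rw [show T z = T (z.1, z.2) from rfl, hTf]
  simp only [toFun, ← hlocal z]
  congr 2
  funext u
  by_cases hFo : u ∈ Fo
  · simp [E, hFo]
  · by_cases hFi : u ∈ Fi <;> simp [E, extend, window, hFi, hFo]

theorem continuous : Continuous R := by
  let f : Window R.E n k × Tape d n k → Tape d n k := fun p =>
    (shiftC (-R.vec p.1) (fun u => if u ∈ R.E then R.pat p.1 u else p.2.1 u), R.st p.1)
  have hf : Continuous f := continuous_prod_of_discrete_left.2 fun i => by
    refine Continuous.prodMk (continuous_pi fun u => ?_) (by fun_prop)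
    by_cases h : u - -R.vec i ∈ R.E <;> simp only [shiftC, h, if_true, if_false] <;> fun_prop
  exact hf.comp ((continuous_window R.E).prodMk continuous_id)

theorem isClosed_range : IsClosed (range R) := (isCompact_range R.continuous).isClosed

def back (i : Window R.E n k) (y : Tape d n k) : Tape d n k :=
  (fun u => if h : u ∈ R.E then i.1 ⟨u, h⟩ else y.1 (u - R.vec i), i.2)

def outCyl (i : Window R.E n k) : Set (Tape d n k) :=
  {y | (∀ u ∈ R.E, y.1 (u - R.vec i) = R.pat i u) ∧ y.2 = R.st i}

theorem window_back (i : Window R.E n k) (y : Tape d n k) : window R.E (R.back i y) = i := by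
  simp [window, back]

theorem apply_back {i : Window R.E n k} {y : Tape d n k} (hy : y ∈ R.outCyl i) :
    R (R.back i y) = y := by
  refine Prod.ext (funext fun u => ?_) (by rw [apply_snd, window_back, hy.2])
  rw [apply_fst, window_back]
  split_ifs with h
  · simpa using (hy.1 _ h).symm
  · simp [back, h]

theorem apply_mem_outCyl (z : Tape d n k) : R z ∈ R.outCyl (window R.E z) :=
  ⟨fun u hu => by simp [apply_fst, hu], rfl⟩

theorem image_cyl {G : Finset (Fin d → ℤ)} (hG : R.E ⊆ G) (z : Tape d n k) :
    R '' cyl G z.1 z.2 = cyl (G.image (· - R.vec (window R.E z))) (R z).1 (R z).2 := by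
  set i := window R.E z
  apply Subset.antisymm
  · rintro _ ⟨w, hw, rfl⟩
    have hwi : window R.E w = i := window_eq_iff_mem_cyl.2 (cyl_anti hG _ _ hw)
    refine ⟨fun s hs => ?_, by rw [apply_snd, apply_snd, hwi]⟩
    obtain ⟨u, hu, rfl⟩ := Finset.mem_image.1 hs
    simp [apply_fst, hwi, i, hw.1 u hu]
  · intro y hy
    have hout : y ∈ R.outCyl i := ⟨fun u hu => by
      simpa [apply_fst, hu, i] using hy.1 _ (Finset.mem_image_of_mem _ (hG hu)), hy.2⟩
    refine ⟨R.back i y, ⟨fun u hu => ?_, rfl⟩, R.apply_back hout⟩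
    by_cases h : u ∈ R.E
    · simp [back, h, i, window]
    · simpa [back, h, apply_fst, i] using hy.1 _ (Finset.mem_image_of_mem _ hu)

def outWindow : Finset (Fin d → ℤ) :=
  Finset.univ.biUnion fun i : Window R.E n k => R.E.image (· - R.vec i)

theorem sub_vec_mem_outWindow (i : Window R.E n k) {u : Fin d → ℤ} (hu : u ∈ R.E) :
    u - R.vec i ∈ R.outWindow :=
  Finset.mem_biUnion.2 ⟨i, Finset.mem_univ _, Finset.mem_image_of_mem _ hu⟩

theorem mem_outCyl_of_window_eq {i : Window R.E n k} {y y' : Tape d n k} (hy : y ∈ R.outCyl i)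
    (h : window R.outWindow y' = window R.outWindow y) : y' ∈ R.outCyl i := by
  obtain ⟨hagree, hstate⟩ := window_eq_iff_mem_cyl.1 h
  exact ⟨fun u hu => (hagree _ (R.sub_vec_mem_outWindow i hu)).trans (hy.1 u hu),
    hstate.trans hy.2⟩

-- If the tape lies in the output cylinder of `sel j` (`j` its content on `outWindow`), restore
-- the content `sel j` on `E` and undo the shift.
def sectionRule [NeZero n] (sel : Window R.outWindow n k → Window R.E n k) : LocalRule d n k where
  E := R.outWindow
  pat j s := if s + R.vec (sel j) ∈ R.E then (extend (sel j)).1 (s + R.vec (sel j))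
    else (extend j).1 s
  st j := (sel j).2
  vec j := -R.vec (sel j)

theorem sectionRule_apply [NeZero n] (sel : Window R.outWindow n k → Window R.E n k)
    (z : Tape d n k) : R.sectionRule sel z = R.back (sel (window R.outWindow z)) z := by
  refine Prod.ext (funext fun u => ?_) rfl
  simp only [sectionRule, toFun, shiftC, back, neg_neg, sub_add_cancel]
  by_cases hu : u ∈ R.E
  · simp [hu, R.sub_vec_mem_outWindow _ hu, extend]
  · simp only [hu, if_false, dite_false]
    split_ifs with hW
    · exact extend_window_fst_of_mem z hW
    · rfl

theorem exists_rightInverse_of_surjective [NeZero n] (hsurj : Surjective R) :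
    ∃ R' : LocalRule d n k, RightInverse R' R := by
  have hcover : ∀ j : Window R.outWindow n k, ∃ i, extend j ∈ R.outCyl i := fun j => by
    obtain ⟨x, hx⟩ := hsurj (extend j)
    exact ⟨window R.E x, hx ▸ R.apply_mem_outCyl x⟩
  choose sel hsel using hcover
  refine ⟨R.sectionRule sel, fun z => ?_⟩
  rw [sectionRule_apply]
  exact R.apply_back (R.mem_outCyl_of_window_eq (hsel _) (window_extend _).symm)

section Measure

variable [MeasurableSpace (Tape d n k)] [BorelSpace (Tape d n k)] {μ : Measure (Tape d n k)}

theorem measurableEmbedding (hinj : Injective R) : MeasurableEmbedding R :=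
  (R.continuous.isClosedEmbedding hinj).measurableEmbedding

theorem comap_eq_self [NeZero n] (hμ : IsUniform μ) (hinj : Injective R) : μ.comap R = μ := by
  refine (Measure.ext_of_generateFrom_of_cover_subset
    (measurableSpace_eq_generateFrom_cylsOver R.E) (isPiSystem_cylsOver R.E)
    (T := range fun i : Window R.E n k => cyl R.E (extend i).1 (extend i).2) ?_
    (countable_range _) ?_ ?_ ?_).symm
  · rintro _ ⟨i, rfl⟩
    exact ⟨R.E, extend i, subset_rfl, rfl⟩
  · refine sUnion_eq_univ_iff.2 fun z => ⟨_, ⟨window R.E z, rfl⟩, ?_⟩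
    exact window_eq_iff_mem_cyl.1 (window_extend _).symm
  · rintro _ ⟨i, rfl⟩
    exact hμ.measure_cyl_ne_top _ _ _
  · rintro _ ⟨G, z, hG, rfl⟩
    rw [(R.measurableEmbedding hinj).comap_apply, R.image_cyl hG, hμ, hμ,
      Finset.card_image_of_injective _ sub_left_injective]

theorem measure_image [NeZero n] (hμ : IsUniform μ) (hinj : Injective R) (A : Set (Tape d n k)) :
    μ (R '' A) = μ A := by
  rw [← (R.measurableEmbedding hinj).comap_apply, R.comap_eq_self hμ hinj]

theorem surjective_of_measure_range_eq [NeZero n] (hμ : IsUniform μ)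
    (h : μ (range R) = μ univ) : Surjective R :=
  have := hμ.isFiniteMeasure
  have := hμ.isOpenPosMeasure
  R.continuous.surjective_of_measure_range_eq μ h

theorem surjective_of_injective [NeZero n] (hμ : IsUniform μ) (hinj : Injective R) :
    Surjective R :=
  R.surjective_of_measure_range_eq hμ (by rw [← image_univ, R.measure_image hμ hinj])

theorem measure_preimage [NeZero n] (hμ : IsUniform μ) (hinj : Injective R)
    (A : Set (Tape d n k)) : μ (R ⁻¹' A) = μ A := by
  rw [← R.measure_image hμ hinj, image_preimage_eq A (R.surjective_of_injective hμ hinj)]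

theorem exists_inverse_of_surjective [NeZero n] (hμ : IsUniform μ) (hsurj : Surjective R) :
    ∃ R' : LocalRule d n k, R ∘ R' = id ∧ R' ∘ R = id := by
  obtain ⟨R', hR'⟩ := R.exists_rightInverse_of_surjective hsurj
  have hsurj' : Surjective R' := R'.surjective_of_injective hμ hR'.injective
  exact ⟨R', hR'.comp_eq_id, (hR'.rightInverse_of_surjective hsurj').comp_eq_id⟩

end Measure

end LocalRule

end TapeTM

theorem tapeTM_injective_surjective_reversible_measure_tfae_general
    (d n k : ℕ) (hn : 1 ≤ n)
    (μ : @Measure (Tape d n k) (borel (Tape d n k)))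
    (hμ : ∀ (F : Finset (Fin d → ℤ)) (p : (Fin d → ℤ) → Fin n) (q : Fin k),
        μ {y : Tape d n k | (∀ u ∈ F, y.1 u = p u) ∧ y.2 = q} =
          1 / ((n : ENNReal) ^ F.card * (k : ENNReal)))
    (T : Tape d n k → Tape d n k) (hT : IsTapeTM d n k T) :
    List.TFAE
      [ Function.Injective T,
        Function.Surjective T,
        (∃ T' : Tape d n k → Tape d n k, IsTapeTM d n k T' ∧ T ∘ T' = id ∧ T' ∘ T = id),
        (∀ A : Set (Tape d n k), MeasurableSet[borel (Tape d n k)] A → μ (T ⁻¹' A) = μ A),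
        (∀ A : Set (Tape d n k), MeasurableSet[borel (Tape d n k)] A → μ (T '' A) = μ A) ] := by
  let _ : MeasurableSpace (Tape d n k) := borel _
  have : BorelSpace (Tape d n k) := ⟨rfl⟩
  have : NeZero n := ⟨by omega⟩
  have hμ : TapeTM.IsUniform μ := hμ
  obtain ⟨R, rfl⟩ := hT.exists_localRule
  tfae_have 1 → 4 := fun hinj A _ => R.measure_preimage hμ hinj A
  tfae_have 1 → 5 := fun hinj A _ => R.measure_image hμ hinj A
  tfae_have 4 → 2 := fun h => R.surjective_of_measure_range_eq hμ <| by
    rw [← h _ R.isClosed_range.measurableSet, preimage_range]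
  tfae_have 5 → 2 := fun h => R.surjective_of_measure_range_eq hμ <| by
    rw [← image_univ, h _ MeasurableSet.univ]
  tfae_have 2 → 3 := fun hsurj =>
    let ⟨R', hR'⟩ := R.exists_inverse_of_surjective hμ hsurj
    ⟨R', R'.isTapeTM, hR'⟩
  tfae_have 3 → 1 := fun ⟨_, _, _, hleft⟩ => LeftInverse.injective (congrFun hleft)
  tfae_finish

/-- For a moving-tape `(ℤ^d,n,k)`-Turing machine `T`, the following
are equivalent: (1) `T` is injective; (2) `T` is surjective; (3) `T` has a moving-tape
inverse (i.e. `T ∈ RTM_fix(ℤ^d,n,k)`); (4) `μ (T⁻¹ A) = μ A` for every Borel set `A`;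
(5) `μ (T '' A) = μ A` for every Borel set `A`.  Here `μ` is the uniform measure on
`Σ^{ℤ^d} × Q`: the unique Borel probability measure giving each cylinder
`[p] × {q}` (with `p` a pattern of finite support `F`) measure `1 / (n^|F| · k)`. -/
theorem tapeTM_injective_surjective_reversible_measure_tfae
    (d n k : ℕ) (hd : 1 ≤ d) (hn : 1 ≤ n) (hk : 1 ≤ k)
    (μ : @Measure (Tape d n k) (borel (Tape d n k)))
    (hμ : ∀ (F : Finset (Fin d → ℤ)) (p : (Fin d → ℤ) → Fin n) (q : Fin k),
        μ {y : Tape d n k | (∀ u ∈ F, y.1 u = p u) ∧ y.2 = q} =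
          1 / ((n : ENNReal) ^ F.card * (k : ENNReal)))
    (T : Tape d n k → Tape d n k) (hT : IsTapeTM d n k T) :
    List.TFAE
      [ Function.Injective T,
        Function.Surjective T,
        (∃ T' : Tape d n k → Tape d n k, IsTapeTM d n k T' ∧ T ∘ T' = id ∧ T' ∘ T = id),
        (∀ A : Set (Tape d n k), MeasurableSet[borel (Tape d n k)] A → μ (T ⁻¹' A) = μ A),
        (∀ A : Set (Tape d n k), MeasurableSet[borel (Tape d n k)] A → μ (T '' A) = μ A) ] :=
  tapeTM_injective_surjective_reversible_measure_tfae_general d n k hn μ hμ T hT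
end

section
/- Let d, n, k ≥ 1, Σ = Fin n, Q = Fin k. A function T : Σ^{ℤ^d} × Q → Σ^{ℤ^d} × Q is a moving-tape (ℤ^d,n,k)-Turing machine if and only if T is continuous and there exist a continuous function s : Σ^{ℤ^d} × Q → ℤ^d and a finite set F ⊂ ℤ^d such that for all (x,q), the configurations T_1(x,q) and σ^{s(x,q)}(x) agree on ℤ^d ∖ F (where T_1 denotes the first component of T). -/
open Filter Topology

section FiniteDependence

variable {ι A Q B : Type*} [TopologicalSpace A] [DiscreteTopology A]
  [TopologicalSpace Q] [TopologicalSpace B]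

theorem eventually_forall_mem_eq_nhds (x : ι → A) {E : Set ι} (hE : E.Finite) :
    ∀ᶠ y in 𝓝 x, ∀ i ∈ E, y i = x i :=
  (eventually_all_finite hE).2 fun i _ =>
    ((continuous_apply i).continuousAt (x := x)).eventually_mem (s := {x i})
      (mem_nhds_discrete.2 rfl)

theorem continuous_of_forall_dependsOn [DiscreteTopology Q] {h : (ι → A) × Q → B} {E : Set ι}
    (hE : E.Finite) (hdep : ∀ q, DependsOn (fun x => h (x, q)) E) : Continuous h := by
  refine ((IsLocallyConstant.iff_eventually_eq h).2 fun ⟨x, q⟩ => ?_).continuous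
  filter_upwards [(continuous_fst.tendsto (x, q)).eventually (eventually_forall_mem_eq_nhds x hE),
    continuous_snd.continuousAt.eventually_mem (s := {q}) (mem_nhds_discrete.2 rfl)]
    with ⟨y, q'⟩ hy hq
  cases hq
  exact hdep q' hy

variable [DiscreteTopology B]

theorem Continuous.exists_finset_dependsOn [Finite A] {h : (ι → A) → B} (hc : Continuous h) :
    ∃ E : Finset ι, DependsOn h E := by
  classical
  have hcyl : ∀ x : ι → A, ∃ I : Finset ι, ∀ y : ι → A, (∀ i ∈ I, y i = x i) → h y = h x := by
    intro x
    have hx : h ⁻¹' {h x} ∈ 𝓝 x := hc.continuousAt.preimage_mem_nhds (mem_nhds_discrete.2 rfl)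
    rw [nhds_pi, Filter.mem_pi'] at hx
    obtain ⟨I, t, ht, hsub⟩ := hx
    exact ⟨I, fun y hy => @hsub y fun i hi => by rw [hy i hi]; exact mem_of_mem_nhds (ht i)⟩
  choose I hI using hcyl
  obtain ⟨t, -, ht⟩ := isCompact_univ.elim_nhds_subcover _
    fun x _ => eventually_forall_mem_eq_nhds x (I x).finite_toSet
  refine ⟨t.biUnion I, fun y y' hyy' => ?_⟩
  obtain ⟨x, hx, hyx⟩ := Set.mem_iUnion₂.1 (ht (Set.mem_univ y))
  have hy'x : ∀ i ∈ I x, y' i = x i := fun i hi =>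
    (hyy' i (Finset.mem_biUnion.2 ⟨x, hx, hi⟩)).symm.trans (hyx i hi)
  exact (hI x y hyx).trans (hI x y' hy'x).symm

theorem Continuous.exists_finset_forall_dependsOn [Finite A] [Finite Q] {h : (ι → A) × Q → B}
    (hc : Continuous h) : ∃ E : Finset ι, ∀ q, DependsOn (fun x => h (x, q)) E := by
  classical
  have := Fintype.ofFinite Q
  choose E hE using fun q => (hc.comp (Continuous.prodMk_left q)).exists_finset_dependsOn
  exact ⟨Finset.univ.biUnion E, fun q => (hE q).mono fun i hi =>
    Finset.mem_biUnion.2 ⟨q, Finset.mem_univ q, hi⟩⟩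

end FiniteDependence

section LocalRule

variable {d n k : ℕ}

def ruleStep (Fo : Finset (Fin d → ℤ))
    (f : Tape d n k → ((Fin d → ℤ) → Fin n) × Fin k × (Fin d → ℤ)) (p : Tape d n k) :
    Tape d n k :=
  (shiftC (-(f p).2.2) (fun u => if u ∈ Fo then (f p).1 u else p.1 u), (f p).2.1)

variable {Fi Fo : Finset (Fin d → ℤ)}
  {f : Tape d n k → ((Fin d → ℤ) → Fin n) × Fin k × (Fin d → ℤ)}

theorem finite_range_shift_of_dependsOn
    (hloc : ∀ q, DependsOn (fun x => f (x, q)) (Fi : Set (Fin d → ℤ))) :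
    (Set.range fun p => (f p).2.2).Finite :=
  (isCompact_range (continuous_of_forall_dependsOn Fi.finite_toSet hloc).snd.snd).finite_of_discrete

theorem continuous_ruleStep (hloc : ∀ q, DependsOn (fun x => f (x, q)) (Fi : Set (Fin d → ℤ))) :
    Continuous (ruleStep Fo f) := by
  refine Continuous.prodMk (f := fun p => (ruleStep Fo f p).1) (g := fun p => (ruleStep Fo f p).2)
    (continuous_pi fun u => ?_) ?_
  · refine continuous_of_forall_dependsOn (Fi.finite_toSet.union
      ((finite_range_shift_of_dependsOn hloc).image (u - -·))) fun q x x' hxx' => ?_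
    have hff' : f (x, q) = f (x', q) := hloc q fun i hi => hxx' i (Or.inl hi)
    simp only [ruleStep, shiftC, hff']
    split_ifs
    · rfl
    · exact hxx' _ (Or.inr ⟨_, ⟨(x', q), rfl⟩, rfl⟩)
  · exact continuous_of_forall_dependsOn Fi.finite_toSet fun q x x' hxx' => by
      simp only [ruleStep, hloc q hxx']

theorem exists_finset_ruleStep_eq_shift
    (hloc : ∀ q, DependsOn (fun x => f (x, q)) (Fi : Set (Fin d → ℤ))) :
    ∃ F : Finset (Fin d → ℤ), ∀ x q, ∀ u ∉ F,
      (ruleStep Fo f (x, q)).1 u = shiftC (-(f (x, q)).2.2) x u := by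
  classical
  refine ⟨(finite_range_shift_of_dependsOn hloc).toFinset.biUnion fun v => Fo.image (· - v),
    fun x q u hu => ?_⟩
  have hout : u - -(f (x, q)).2.2 ∉ Fo := fun h => hu (Finset.mem_biUnion.2
    ⟨(f (x, q)).2.2, by simp, Finset.mem_image.2 ⟨_, h, by simp⟩⟩)
  simp only [ruleStep, shiftC, if_neg hout]

end LocalRule

theorem isTapeTM_of_continuous {d n k : ℕ} [Nonempty (Fin n)] {T : Tape d n k → Tape d n k}
    {s : Tape d n k → (Fin d → ℤ)} {F : Finset (Fin d → ℤ)} (hT : Continuous T)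
    (hs : Continuous s) (hF : ∀ x q, ∀ u ∉ F, (T (x, q)).1 u = shiftC (s (x, q)) x u) :
    IsTapeTM d n k T := by
  classical
  set Fo : Finset (Fin d → ℤ) :=
    (isCompact_range hs).finite_of_discrete.toFinset.biUnion fun v => F.image (· - v)
  let data : Tape d n k → (Fo → Fin n) × Fin k × (Fin d → ℤ) :=
    fun p => (fun w => (T p).1 (w + s p), (T p).2, s p)
  have hdata : Continuous data := by
    refine (continuous_pi fun w => ?_).prodMk (hT.snd.prodMk hs)
    exact Continuous.comp (g := fun z : ((Fin d → ℤ) → Fin n) × (Fin d → ℤ) => z.1 (w + z.2))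
      (continuous_prod_of_discrete_right.2 fun v => continuous_apply (w + v)) (hT.fst.prodMk hs)
  obtain ⟨Fi, hFi⟩ := hdata.exists_finset_forall_dependsOn
  let rule (c : (Fo → Fin n) × Fin k × (Fin d → ℤ)) :
      ((Fin d → ℤ) → Fin n) × Fin k × (Fin d → ℤ) :=
    (fun w => if hw : w ∈ Fo then c.1 ⟨w, hw⟩ else Classical.arbitrary _, c.2.1, -c.2.2)
  -- the value of `rule` off `Fo` is never read: there `IsTapeTM` keeps the old tape
  refine ⟨Fi, Fo, rule ∘ data, fun x y q hxy => congrArg rule (hFi q hxy), fun x q => ?_⟩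
  refine Prod.ext (funext fun u => ?_) rfl
  simp only [Function.comp, rule, data, shiftC, neg_neg]
  by_cases hu : u - s (x, q) ∈ Fo
  · simp [hu]
  · have huF : u ∉ F := fun h => hu (Finset.mem_biUnion.2
      ⟨_, by simp, Finset.mem_image.2 ⟨u, h, rfl⟩⟩)
    simp [hu, hF x q u huF, shiftC]

theorem movingTape_iff_continuous_with_shift_indicator_general
    (d n k : ℕ) (hn : 1 ≤ n)
    (T : Tape d n k → Tape d n k) :
    IsTapeTM d n k T ↔
      (Continuous T ∧
        ∃ s : Tape d n k → (Fin d → ℤ), Continuous s ∧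
          ∃ F : Finset (Fin d → ℤ),
            ∀ (x : (Fin d → ℤ) → Fin n) (q : Fin k), ∀ u ∉ F,
              (T (x, q)).1 u = shiftC (s (x, q)) x u) := by
  have : Nonempty (Fin n) := ⟨⟨0, hn⟩⟩
  constructor
  · rintro ⟨Fi, Fo, f, hloc, hT⟩
    obtain rfl : T = ruleStep Fo f := funext fun p => hT p.1 p.2
    have hloc' : ∀ q, DependsOn (fun x => f (x, q)) (Fi : Set (Fin d → ℤ)) :=
      fun q x y hxy => hloc x y q hxy
    exact ⟨continuous_ruleStep hloc', fun p => -(f p).2.2,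
      (continuous_of_forall_dependsOn Fi.finite_toSet hloc').snd.snd.neg,
      exists_finset_ruleStep_eq_shift hloc'⟩
  · rintro ⟨hT, s, hs, F, hF⟩
    exact isTapeTM_of_continuous hT hs hF

/-- A function `T : Σ^{ℤ^d} × Q → Σ^{ℤ^d} × Q` is a moving-tape
`(ℤ^d,n,k)`-Turing machine if and only if it is continuous and there exist a
continuous function `s : Σ^{ℤ^d} × Q → ℤ^d` and a finite set `F ⊆ ℤ^d` such that
for all `(x,q)`, the configurations `T₁(x,q)` and `σ^{s(x,q)} x` agree on `ℤ^d ∖ F`. -/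
theorem movingTape_iff_continuous_with_shift_indicator
    (d n k : ℕ) (hd : 1 ≤ d) (hn : 1 ≤ n) (hk : 1 ≤ k)
    (T : Tape d n k → Tape d n k) :
    IsTapeTM d n k T ↔
      (Continuous T ∧
        ∃ s : Tape d n k → (Fin d → ℤ), Continuous s ∧
          ∃ F : Finset (Fin d → ℤ),
            ∀ (x : (Fin d → ℤ) → Fin n) (q : Fin k), ∀ u ∉ F,
              (T (x, q)).1 u = shiftC (s (x, q)) x u) :=
  movingTape_iff_continuous_with_shift_indicator_general d n k hn T
end

section
/- Let d ≥ 1, n ≥ 2, k ≥ 1. For all T_1, T_2 ∈ RTM_fix(ℤ^d,n,k) one has α(T_1 ∘ T_2) = α(T_1) + α(T_2); that is, the average movement α : RTM_fix(ℤ^d,n,k) → (ℚ^d, +) is a group homomorphism. -/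
open MeasureTheory

/-- `s` is a shift indicator of the moving-tape machine `T`: a continuous map such
that, for some finite `F ⊆ ℤ^d`, the tape `T₁(x,q)` agrees with `σ^{s(x,q)} x`
outside `F`.  (For `n ≥ 2` such an `s` is unique.) -/
def IsShiftIndicator (d n k : ℕ) (T : Tape d n k → Tape d n k)
    (s : Tape d n k → (Fin d → ℤ)) : Prop :=
  Continuous s ∧
    ∃ F : Finset (Fin d → ℤ),
      ∀ (x : (Fin d → ℤ) → Fin n) (q : Fin k), ∀ u ∉ F,
        (T (x, q)).1 u = shiftC (s (x, q)) x u

/-!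
The shift indicator of `T₁ ∘ T₂` is `s₁ ∘ T₂ + s₂`: this map is continuous and describes the
movement of `T₁ ∘ T₂` off a finite set, and with two or more symbols a shift indicator is unique,
since two different shifts would copy two freely chosen far-away symbols to the same cell. It
remains to see `∫ s₁ ∘ T₂ = ∫ s₁`. By compactness `s₁` only sees the pattern on a finite window
`E`, and the inverse of `T₂`, being a machine, maps every cylinder over a large enough `E` onto a
translated cylinder of the same size; hence the pattern on `E` has the same (uniform) law before
and after applying `T₂`.
-/

open Set Filter Topology

namespace Tape

variable {d n k : ℕ}

def pattern (E : Finset (Fin d → ℤ)) (y : Tape d n k) : (E → Fin n) × Fin k :=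
  (fun u => y.1 u, y.2)

def cyl (E : Finset (Fin d → ℤ)) (p : (Fin d → ℤ) → Fin n) (q : Fin k) : Set (Tape d n k) :=
  {y | (∀ u ∈ E, y.1 u = p u) ∧ y.2 = q}

theorem preimage_pattern (E : Finset (Fin d → ℤ)) (p : (Fin d → ℤ) → Fin n) (q : Fin k) :
    pattern E ⁻¹' {(fun u : E => p u, q)} = cyl E p q := by
  ext y
  simp [pattern, cyl, funext_iff]

theorem preimage_pattern_singleton (E : Finset (Fin d → ℤ)) (z : Tape d n k) :
    pattern E ⁻¹' {pattern E z} = cyl E z.1 z.2 :=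
  preimage_pattern E z.1 z.2

theorem continuous_pattern (E : Finset (Fin d → ℤ)) : Continuous (pattern E : Tape d n k → _) :=
  (continuous_pi fun _ => (continuous_apply _).comp continuous_fst).prodMk continuous_snd

theorem isOpen_cyl (E : Finset (Fin d → ℤ)) (p : (Fin d → ℤ) → Fin n) (q : Fin k) :
    IsOpen (cyl E p q) :=
  preimage_pattern E p q ▸ (isOpen_discrete _).preimage (continuous_pattern E)

theorem exists_cyl_subset {U : Set (Tape d n k)} {z : Tape d n k} (hU : U ∈ 𝓝 z) :
    ∃ E, cyl E z.1 z.2 ⊆ U := by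
  rw [nhds_prod_eq, nhds_discrete (Fin k), nhds_pi, Filter.mem_prod_iff] at hU
  obtain ⟨V, hV, W, hW, hVW⟩ := hU
  simp only [nhds_discrete] at hV
  obtain ⟨I, hI, hIV⟩ := mem_pi_pure.1 hV
  exact ⟨hI.toFinset, fun y ⟨hy, hq⟩ =>
    hVW ⟨hIV _ fun u hu => hy u (hI.mem_toFinset.2 hu), hq ▸ mem_pure.1 hW⟩⟩

theorem exists_factorsThrough_pattern {β : Type*} [TopologicalSpace β] [DiscreteTopology β]
    {s : Tape d n k → β} (hs : Continuous s) :
    ∃ E₀, ∀ E, E₀ ⊆ E → s.FactorsThrough (pattern E) := by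
  choose E hE using fun z : Tape d n k => exists_cyl_subset
    (hs.continuousAt.preimage_mem_nhds ((isOpen_discrete {s z}).mem_nhds (mem_singleton _)))
  obtain ⟨t, -, ht⟩ := isCompact_univ.elim_nhds_subcover (fun z => cyl (E z) z.1 z.2)
    fun z _ => (isOpen_cyl _ _ _).mem_nhds ⟨fun _ _ => rfl, rfl⟩
  refine ⟨t.biUnion E, fun E' hE' y y' hyy' => ?_⟩
  obtain ⟨z, hz, hyz⟩ := mem_iUnion₂.1 (ht (mem_univ y))
  have hy'z : y' ∈ cyl (E z) z.1 z.2 := by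
    obtain ⟨hy, hq⟩ : y ∈ cyl E' y'.1 y'.2 := by
      rw [← preimage_pattern_singleton]
      exact hyy'
    refine ⟨fun u hu => ?_, hq ▸ hyz.2⟩
    rw [← hyz.1 u hu]
    exact (hy u (hE' (Finset.mem_biUnion.2 ⟨z, hz, hu⟩))).symm
  exact Eq.trans (hE z hyz) (hE z hy'z).symm

end Tape

open Tape

namespace IsTapeTM

variable {d n k : ℕ} {T : Tape d n k → Tape d n k}

theorem continuous (hT : IsTapeTM d n k T) : Continuous T := by
  obtain ⟨Fi, Fo, f, hloc, hTf⟩ := hT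
  refine continuous_iff_continuousAt.2 fun z => ?_
  set w := f z
  have hT_near : T =ᶠ[𝓝 z] fun y =>
      (shiftC (-w.2.2) (fun u => if u ∈ Fo then w.1 u else y.1 u), w.2.1) := by
    filter_upwards [(isOpen_cyl Fi z.1 z.2).mem_nhds ⟨fun _ _ => rfl, rfl⟩] with y ⟨hy, hq⟩
    rw [← Prod.mk.eta (p := y), hTf, hq, hloc y.1 z.1 z.2 hy]
  refine (Continuous.prodMk (continuous_pi fun u => ?_) continuous_const).continuousAt.congr
    hT_near.symm
  by_cases hu : u - -w.2.2 ∈ Fo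
  · simp only [shiftC, hu, if_true, continuous_const]
  · simp only [shiftC, hu, if_false]
    exact (continuous_apply _).comp continuous_fst

theorem exists_image_cyl (hT : IsTapeTM d n k T) :
    ∃ E₀ : Finset (Fin d → ℤ), ∀ E, E₀ ⊆ E → ∀ p q, ∃ v : Fin d → ℤ,
      T '' cyl E p q = cyl (E.map (Equiv.subRight v).toEmbedding) (T (p, q)).1 (T (p, q)).2 := by
  obtain ⟨Fi, Fo, f, hloc, hTf⟩ := hT
  refine ⟨Fi ∪ Fo, fun E hE p q => ?_⟩
  obtain ⟨⟨w, q₁, v⟩, hw⟩ : ∃ a, f (p, q) = a := ⟨_, rfl⟩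
  have hFo : Fo ⊆ E := Finset.union_subset_right hE
  have hf : ∀ x, (∀ u ∈ E, x u = p u) → f (x, q) = (w, q₁, v) :=
    fun x hx => hw ▸ hloc x p q fun u hu => hx u (Finset.union_subset_left hE hu)
  refine ⟨v, ?_⟩
  ext ⟨z, r⟩
  simp only [mem_image, cyl, Finset.mem_map_equiv, Equiv.subRight_symm_apply]
  constructor
  · rintro ⟨⟨x, q'⟩, ⟨hx : ∀ u ∈ E, x u = p u, hq' : q' = q⟩, hxz⟩
    rw [← hxz, hq', hTf, hTf, hf x hx, hw]
    refine ⟨fun t ht => ?_, rfl⟩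
    by_cases h : t + v ∈ Fo <;> simp [shiftC, h, hx _ ht]
  · rintro ⟨hz, rfl⟩
    set x : (Fin d → ℤ) → Fin n := fun u => if u ∈ E then p u else z (u - v)
    have hx : ∀ u ∈ E, x u = p u := fun u hu => if_pos hu
    refine ⟨(x, q), ⟨hx, rfl⟩, ?_⟩
    rw [hTf x q, hf x hx, hTf p q, hw]
    refine Prod.ext (funext fun t => ?_) rfl
    by_cases ht : t + v ∈ E
    · rw [hz t ht, hTf, hw]
      by_cases h : t + v ∈ Fo <;> simp [shiftC, h, hx _ ht]
    · have h : t + v ∉ Fo := fun h => ht (hFo h)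
      simp [shiftC, h, x, ht]

end IsTapeTM

namespace IsShiftIndicator

variable {d n k : ℕ} {T T₁ T₂ : Tape d n k → Tape d n k} {s s' s₁ s₂ : Tape d n k → Fin d → ℤ}

theorem unique (hn : 2 ≤ n) (hs : IsShiftIndicator d n k T s)
    (hs' : IsShiftIndicator d n k T s') : s = s' := by
  obtain ⟨hsc, F, hF⟩ := hs
  obtain ⟨hsc', F', hF'⟩ := hs'
  funext ⟨x, q⟩
  by_contra hne
  set a := s (x, q)
  set b := s' (x, q)
  obtain ⟨i, -⟩ := Function.ne_iff.1 hne
  have := Pi.infinite_of_exists_right (π := fun _ : Fin d => ℤ) i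
  have := Fin.nontrivial_iff_two_le.2 hn
  obtain ⟨α, β, hαβ⟩ := exists_pair_ne (Fin n)
  obtain ⟨E, hE⟩ := exists_cyl_subset ((hsc.prodMk hsc').continuousAt.preimage_mem_nhds
    ((isOpen_discrete {(a, b)}).mem_nhds rfl))
  obtain ⟨u₀, hu₀⟩ := (F ∪ F' ∪ E.map (Equiv.addRight a).toEmbedding ∪
    E.map (Equiv.addRight b).toEmbedding).exists_notMem
  simp only [Finset.mem_union, Finset.mem_map_equiv, Equiv.addRight_symm_apply,
    ← sub_eq_add_neg, not_or] at hu₀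
  have hab : u₀ - a ≠ u₀ - b := fun h => hne (sub_right_injective h)
  -- Write different symbols at the two cells that `T` would copy to `u₀` along `a` and `b`.
  obtain ⟨x', hx'a, hx'b, hx'E⟩ : ∃ x' : (Fin d → ℤ) → Fin n,
      x' (u₀ - a) = α ∧ x' (u₀ - b) = β ∧ ∀ u ∈ E, x' u = x u :=
    ⟨Function.update (Function.update x (u₀ - a) α) (u₀ - b) β,
      by rw [Function.update_of_ne hab, Function.update_self], Function.update_self _ _ _,
      fun u hu => by
        rw [Function.update_of_ne (by rintro rfl; exact hu₀.2 hu),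
          Function.update_of_ne (by rintro rfl; exact hu₀.1.2 hu)]⟩
  have hsab := hE (show (x', q) ∈ cyl E x q from ⟨hx'E, rfl⟩)
  have h₁ := hF x' q u₀ hu₀.1.1.1
  have h₂ := hF' x' q u₀ hu₀.1.1.2
  rw [shiftC, show s (x', q) = a from congrArg Prod.fst hsab, hx'a] at h₁
  rw [shiftC, show s' (x', q) = b from congrArg Prod.snd hsab, hx'b] at h₂
  exact hαβ (h₁.symm.trans h₂)

theorem comp (hs₁ : IsShiftIndicator d n k T₁ s₁) (hs₂ : IsShiftIndicator d n k T₂ s₂)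
    (hT₂ : Continuous T₂) : IsShiftIndicator d n k (T₁ ∘ T₂) fun z => s₁ (T₂ z) + s₂ z := by
  obtain ⟨hc₁, F₁, hF₁⟩ := hs₁
  obtain ⟨hc₂, F₂, hF₂⟩ := hs₂
  have hfin : (range s₁).Finite := (isCompact_range hc₁).finite_of_discrete
  refine ⟨(hc₁.comp hT₂).add hc₂,
    F₁ ∪ hfin.toFinset.biUnion fun c => F₂.map (Equiv.addRight c).toEmbedding, fun x q u hu => ?_⟩
  simp only [Finset.mem_union, Finset.mem_biUnion, Finset.mem_map_equiv,
    Equiv.addRight_symm_apply, not_or, not_exists, not_and] at hu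
  have h₂ : u - s₁ (T₂ (x, q)) ∉ F₂ := hu.2 _ (hfin.mem_toFinset.2 (mem_range_self _))
  rw [Function.comp_apply, ← Prod.mk.eta (p := T₂ (x, q)), hF₁ _ _ u hu.1]
  simp only [shiftC, hF₂ x q _ h₂, sub_sub]

end IsShiftIndicator

open ProbabilityTheory

namespace Tape

variable {d n k : ℕ} [MeasurableSpace (Tape d n k)]

theorem isFiniteMeasure_of_measure_cyl [NeZero n] {μ : Measure (Tape d n k)}
    (hμ : ∀ F p q, μ (cyl F p q) = 1 / ((n : ENNReal) ^ F.card * (k : ENNReal))) :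
    IsFiniteMeasure μ := by
  refine ⟨(measure_mono fun y _ => mem_iUnion.2 ⟨y.2, by simp [cyl]⟩ :
    μ univ ≤ μ (⋃ q, cyl ∅ 0 q)).trans_lt ?_⟩
  refine (measure_iUnion_fintype_le μ _).trans_lt (ENNReal.sum_lt_top.2 fun q _ => ?_)
  simpa [hμ] using Fin.pos q

theorem exists_identDistrib_pattern_comp [OpensMeasurableSpace (Tape d n k)]
    {μ : Measure (Tape d n k)} (c : ℕ → ENNReal) (hμ : ∀ F p q, μ (cyl F p q) = c F.card)
    {T T' : Tape d n k → Tape d n k} (hT : Continuous T) (hT' : IsTapeTM d n k T')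
    (hleft : Function.LeftInverse T T') (hright : Function.RightInverse T T') :
    ∃ E₀ : Finset (Fin d → ℤ), ∀ E, E₀ ⊆ E → IdentDistrib (pattern E ∘ T) (pattern E) μ μ := by
  obtain ⟨E₀, hE₀⟩ := hT'.exists_image_cyl
  refine ⟨E₀, fun E hE => ?_⟩
  have hmeas := (continuous_pattern (n := n) (k := k) E).measurable
  have hmeasT := ((continuous_pattern E).comp hT).measurable
  refine ⟨hmeasT.aemeasurable, hmeas.aemeasurable, Measure.ext_of_singleton fun j => ?_⟩
  rw [Measure.map_apply hmeasT (measurableSet_singleton j),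
    Measure.map_apply hmeas (measurableSet_singleton j)]
  rcases em (j ∈ range (pattern E)) with ⟨z, rfl⟩ | hj
  · obtain ⟨v, hv⟩ := hE₀ E hE z.1 z.2
    rw [preimage_comp, preimage_pattern_singleton, ← image_eq_preimage_of_inverse hleft hright,
      hv, hμ, hμ, Finset.card_map]
  · rw [preimage_comp, preimage_eq_empty (disjoint_singleton_left.2 hj), preimage_empty]

end Tape

namespace Function.FactorsThrough

variable {X Y ι : Type*} [MeasurableSpace X] [MeasurableSpace ι] [MeasurableSingletonClass ι]
  {r : X → ι} {g : X → ℝ}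

theorem integrable [Finite ι] {μ : Measure X} [IsFiniteMeasure μ] (hg : g.FactorsThrough r)
    (hr : AEMeasurable r μ) : Integrable g μ := by
  obtain ⟨c, rfl⟩ := (factorsThrough_iff g).1 hg
  exact Integrable.of_finite.comp_aemeasurable hr

theorem integral_comp_of_identDistrib [Countable ι] [MeasurableSpace Y] {μ : Measure X}
    {ν : Measure Y} {φ : Y → X} (hg : g.FactorsThrough r) (h : IdentDistrib (r ∘ φ) r ν μ) :
    ∫ y, g (φ y) ∂ν = ∫ x, g x ∂μ := by
  obtain ⟨c, rfl⟩ := (factorsThrough_iff g).1 hg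
  exact (h.comp (measurable_of_countable c)).integral_eq

end Function.FactorsThrough

theorem averageMovement_add_general
    (d n k : ℕ) (hn : 2 ≤ n)
    (μ : @Measure (Tape d n k) (borel (Tape d n k)))
    (hμ : ∀ (F : Finset (Fin d → ℤ)) (p : (Fin d → ℤ) → Fin n) (q : Fin k),
        μ {y : Tape d n k | (∀ u ∈ F, y.1 u = p u) ∧ y.2 = q} =
          1 / ((n : ENNReal) ^ F.card * (k : ENNReal)))
    (T₁ T₂ : Tape d n k → Tape d n k)
    (hT₂ : IsTapeTM d n k T₂ ∧ ∃ T' , IsTapeTM d n k T' ∧ T₂ ∘ T' = id ∧ T' ∘ T₂ = id)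
    (s₁ s₂ s₁₂ : Tape d n k → (Fin d → ℤ))
    (hs₁ : IsShiftIndicator d n k T₁ s₁)
    (hs₂ : IsShiftIndicator d n k T₂ s₂)
    (hs₁₂ : IsShiftIndicator d n k (T₁ ∘ T₂) s₁₂) :
    ∀ i : Fin d,
      (∫ p, ((s₁₂ p i : ℤ) : ℝ) ∂μ) =
        (∫ p, ((s₁ p i : ℤ) : ℝ) ∂μ) + ∫ p, ((s₂ p i : ℤ) : ℝ) ∂μ := by
  intro i
  let : MeasurableSpace (Tape d n k) := borel _
  have : BorelSpace (Tape d n k) := ⟨rfl⟩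
  have : NeZero n := ⟨by omega⟩
  have := isFiniteMeasure_of_measure_cyl hμ
  obtain ⟨hTM₂, T', hTM', hleft, hright⟩ := hT₂
  have hcocycle : s₁₂ = fun z => s₁ (T₂ z) + s₂ z :=
    hs₁₂.unique hn (hs₁.comp hs₂ hTM₂.continuous)
  obtain ⟨E₀, hE₀⟩ := exists_identDistrib_pattern_comp (fun m => 1 / ((n : ENNReal) ^ m * k))
    hμ hTM₂.continuous hTM' (Function.leftInverse_iff_comp.2 hleft)
    (Function.rightInverse_iff_comp.2 hright)
  obtain ⟨E₁, hE₁⟩ := exists_factorsThrough_pattern hs₁.1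
  obtain ⟨E₂, hE₂⟩ := exists_factorsThrough_pattern hs₂.1
  have hid := hE₀ (E₀ ∪ E₁) Finset.subset_union_left
  have hg₁ : (fun z => ((s₁ z i : ℤ) : ℝ)).FactorsThrough (pattern (E₀ ∪ E₁)) := fun _ _ h =>
    congrArg (fun v : Fin d → ℤ => ((v i : ℤ) : ℝ)) (hE₁ _ Finset.subset_union_right h)
  have hg₁T : (fun z => ((s₁ (T₂ z) i : ℤ) : ℝ)).FactorsThrough (pattern (E₀ ∪ E₁) ∘ T₂) :=
    fun _ _ h => hg₁ h
  have hg₂ : (fun z => ((s₂ z i : ℤ) : ℝ)).FactorsThrough (pattern E₂) := fun _ _ h =>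
    congrArg (fun v : Fin d → ℤ => ((v i : ℤ) : ℝ)) (hE₂ _ subset_rfl h)
  simp only [hcocycle, Pi.add_apply, Int.cast_add]
  rw [integral_add (hg₁T.integrable hid.aemeasurable_fst)
    (hg₂.integrable (continuous_pattern E₂).measurable.aemeasurable),
    hg₁.integral_comp_of_identDistrib hid]

/-- The average movement `α(T) = ∫ s_T dμ` is a group homomorphism
`RTM_fix(ℤ^d,n,k) → ℚ^d`: for reversible moving-tape machines `T₁, T₂`, with shift
indicators `s₁, s₂` and `s₁₂` (of `T₁ ∘ T₂`), we have `α(T₁ ∘ T₂) = α(T₁) + α(T₂)`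
(coordinatewise, with the values read in `ℝ ⊇ ℚ`). -/
theorem averageMovement_add
    (d n k : ℕ) (hd : 1 ≤ d) (hn : 2 ≤ n) (hk : 1 ≤ k)
    (μ : @Measure (Tape d n k) (borel (Tape d n k)))
    (hμ : ∀ (F : Finset (Fin d → ℤ)) (p : (Fin d → ℤ) → Fin n) (q : Fin k),
        μ {y : Tape d n k | (∀ u ∈ F, y.1 u = p u) ∧ y.2 = q} =
          1 / ((n : ENNReal) ^ F.card * (k : ENNReal)))
    (T₁ T₂ : Tape d n k → Tape d n k)
    (hT₁ : IsTapeTM d n k T₁ ∧ ∃ T' , IsTapeTM d n k T' ∧ T₁ ∘ T' = id ∧ T' ∘ T₁ = id)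
    (hT₂ : IsTapeTM d n k T₂ ∧ ∃ T' , IsTapeTM d n k T' ∧ T₂ ∘ T' = id ∧ T' ∘ T₂ = id)
    (s₁ s₂ s₁₂ : Tape d n k → (Fin d → ℤ))
    (hs₁ : IsShiftIndicator d n k T₁ s₁)
    (hs₂ : IsShiftIndicator d n k T₂ s₂)
    (hs₁₂ : IsShiftIndicator d n k (T₁ ∘ T₂) s₁₂) :
    ∀ i : Fin d,
      (∫ p, ((s₁₂ p i : ℤ) : ℝ) ∂μ) =
        (∫ p, ((s₁ p i : ℤ) : ℝ) ∂μ) + ∫ p, ((s₂ p i : ℤ) : ℝ) ∂μ :=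
  averageMovement_add_general d n k hn μ hμ T₁ T₂ hT₂ s₁ s₂ s₁₂ hs₁ hs₂ hs₁₂
end

section
/- For all d ≥ 1, n ≥ 2 and k ≥ 1, the group RTM(ℤ^d,n,k) of reversible moving-head (ℤ^d,n,k)-Turing machines is not finitely generated. -/
/-- The group `RTM(ℤ^d,n,k)` realized as the set of permutations of the moving-head
space such that both the permutation and its inverse are Turing machines. -/
def RTMset (d n k : ℕ) : Set (Equiv.Perm (Head d n k)) :=
  {e | IsTM d n k ⇑e ∧ IsTM d n k ⇑e.symm}

/-!
Let `torusMeanMove N T` be the mean displacement of one step of `T` from a configuration of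
period `N + 1` in every direction, averaged over all such configurations and all states. For a
Turing machine this is eventually constant in `N`; its limit `avgMove T` is the expected
displacement of one step from a uniformly random configuration. On a large torus a reversible
machine permutes the pairs (configuration seen from the head, state), so `avgMove` is additive:
a homomorphism `RTM(ℤ^d,n,k) → ℚ^d`. The values of `avgMove` on finitely many machines lie in
`(1/M) ℤ^d` for a single `M`, hence so do its values on the subgroup they generate.
But the machine `slide` that steps along `e₁` exactly when the `m` cells it reads are blank
(dragging the blank run along by a swap) has `avgMove` equal to `n⁻ᵐ e₁`, and `n⁻ᴹ ∉ (1/M) ℤ`.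
-/

open Filter Function

/-- Every `p : κ → β` has exactly `|β| ^ (|ι| - |κ|)` extensions `y` with `y ∘ j = p`. -/
theorem sum_comp_eq_card_pow_smul_sum {ι κ β M : Type*} [Fintype ι] [DecidableEq ι] [Fintype κ]
    [DecidableEq κ] [Fintype β] [AddCommMonoid M] {j : κ → ι} (hj : Injective j)
    (g : (κ → β) → M) :
    ∑ y : ι → β, g (y ∘ j) = Fintype.card β ^ (Fintype.card ι - Fintype.card κ) • ∑ p, g p := by
  let e : (ι → β) ≃ (κ → β) × ({i // i ∉ Set.range j} → β) :=
    (Equiv.piEquivPiSubtypeProd (· ∈ Set.range j) fun _ => β).trans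
      ((Equiv.arrowCongr (Equiv.ofInjective j hj).symm (Equiv.refl β)).prodCongr (Equiv.refl _))
  rw [Fintype.sum_equiv e (fun y => g (y ∘ j)) (fun pr => g pr.1) fun y => rfl,
    Fintype.sum_prod_type]
  simp only [Finset.sum_const, Finset.card_univ, Fintype.card_fun, Fintype.card_subtype_compl,
    Set.card_range_of_injective hj, ← Finset.smul_sum]

lemma inv_pow_mul_mul_pow_sub {K : Type*} [Field K] {a : K} (ha : a ≠ 0) (b : K) {f c : ℕ}
    (h : f ≤ c) : (a ^ c * b)⁻¹ * a ^ (c - f) = (a ^ f * b)⁻¹ := by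
  rw [← Nat.sub_add_cancel h, pow_add, Nat.add_sub_cancel, mul_assoc, mul_inv, mul_comm,
    ← mul_assoc, mul_inv_cancel₀ (pow_ne_zero _ ha), one_mul]

lemma exists_pos_forall_mem_zmultiples_inv (s : Finset ℚ) :
    ∃ M : ℕ, 0 < M ∧ ∀ q ∈ s, q ∈ AddSubgroup.zmultiples (M⁻¹ : ℚ) := by
  have hpos : 0 < ∏ q ∈ s, q.den := Finset.prod_pos fun q _ => q.den_pos
  refine ⟨_, hpos, fun q hq => ?_⟩
  obtain ⟨c, hc⟩ := Finset.dvd_prod_of_mem Rat.den hq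
  have hc0 : (c : ℚ) ≠ 0 := by
    rintro h
    simp_all
  refine AddSubgroup.mem_zmultiples_iff.mpr ⟨q.num * c, ?_⟩
  rw [hc, zsmul_eq_mul]
  push_cast
  field_simp
  rw [mul_comm, Rat.mul_den_eq_num]

lemma inv_pow_notMem_zmultiples_inv {n M : ℕ} (hn : 2 ≤ n) (hM : 0 < M) :
    ((n : ℚ) ^ M)⁻¹ ∉ AddSubgroup.zmultiples (M⁻¹ : ℚ) := by
  intro h
  obtain ⟨z, hz⟩ := AddSubgroup.mem_zmultiples_iff.mp h
  have hzM : z * (n : ℤ) ^ M = M := by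
    have : ((n : ℚ) ^ M) ≠ 0 := pow_ne_zero _ (by positivity)
    rw [zsmul_eq_mul] at hz
    field_simp at hz
    exact_mod_cast hz
  have hlt : (M : ℤ) < (n : ℤ) ^ M := by exact_mod_cast Nat.lt_pow_self (by omega)
  have hpos : (0 : ℤ) < (n : ℤ) ^ M := by positivity
  rcases le_or_gt z 0 with hz0 | hz0 <;> nlinarith

namespace MovingHeadTM

variable {d n k : ℕ}

lemma shiftC_apply {A : Type*} (v : Fin d → ℤ) (x : (Fin d → ℤ) → A) (u : Fin d → ℤ) :
    shiftC v x u = x (u - v) := rfl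

lemma shiftC_shiftC {A : Type*} (v w : Fin d → ℤ) (x : (Fin d → ℤ) → A) :
    shiftC v (shiftC w x) = shiftC (v + w) x := by
  funext u
  simp only [shiftC_apply, sub_sub]

@[simp]
lemma shiftC_zero {A : Type*} (x : (Fin d → ℤ) → A) : shiftC 0 x = x := by
  funext u
  simp [shiftC_apply]

def translate (v : Fin d → ℤ) (p : Head d n k) : Head d n k :=
  (shiftC v p.1, p.2.1, p.2.2 + v)

lemma translate_shiftC_neg (p : Head d n k) :
    translate p.2.2 (shiftC (-p.2.2) p.1, p.2.1, 0) = p := by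
  simp [translate, shiftC_shiftC]

/-- A form of `IsTM` stated through the machine itself rather than a rule, with one window `F` for
reading and writing; equivalent to `IsTM` by `exists_isLocalTM_of_isTM` and `IsLocalTM.isTM`. -/
structure IsLocalTM (F : Finset (Fin d → ℤ)) (T : Head d n k → Head d n k) : Prop where
  map_translate : ∀ v p, T (translate v p) = translate v (T p)
  fst_apply_of_notMem : ∀ x q w, w ∉ F → (T (x, q, 0)).1 w = x w
  snd_eq_of_eqOn : ∀ x y q, Set.EqOn x y F → (T (x, q, 0)).2 = (T (y, q, 0)).2
  fst_eqOn_of_eqOn : ∀ x y q, Set.EqOn x y F → Set.EqOn (T (x, q, 0)).1 (T (y, q, 0)).1 F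

namespace IsLocalTM

variable {F : Finset (Fin d → ℤ)} {T : Head d n k → Head d n k}

lemma apply_eq (hT : IsLocalTM F T) (p : Head d n k) :
    T p = translate p.2.2 (T (shiftC (-p.2.2) p.1, p.2.1, 0)) := by
  conv_lhs => rw [← translate_shiftC_neg p]
  exact hT.map_translate _ _

end IsLocalTM

lemma exists_isLocalTM_of_isTM {T : Head d n k → Head d n k} (hT : IsTM d n k T) :
    ∃ F, IsLocalTM F T := by
  obtain ⟨Fi, Fo, f, hf, hT⟩ := hT
  have hT0 : ∀ x q, T (x, q, 0) =
      ((fun u => if u ∈ Fo then (f (x, q)).1 u else x u), (f (x, q)).2.1, (f (x, q)).2.2) := by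
    intro x q
    simpa [shiftC] using hT x q 0
  refine ⟨Fi ∪ Fo, ⟨?_, ?_, ?_, ?_⟩⟩
  · rintro w ⟨x, q, v⟩
    have hview : shiftC (-(v + w)) (shiftC w x) = shiftC (-v) x := by
      rw [shiftC_shiftC, neg_add_rev, neg_add_cancel_comm]
    simp only [translate, hT, hview]
    refine Prod.ext (funext fun u => ?_) (Prod.ext rfl (add_right_comm _ _ _))
    simp only [shiftC_apply, sub_sub, add_comm w]
  · intro x q w hw
    simp [hT0, show w ∉ Fo from fun h => hw (Finset.mem_union_right _ h)]
  · intro x y q hxy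
    rw [hT0, hT0, hf x y q fun u hu => hxy (Finset.mem_union_left _ hu)]
  · intro x y q hxy w hw
    simp only [hT0, hf x y q fun u hu => hxy (Finset.mem_union_left _ hu)]
    split_ifs
    · rfl
    · exact hxy hw

lemma IsLocalTM.isTM [NeZero n] {F : Finset (Fin d → ℤ)} {T : Head d n k → Head d n k}
    (hT : IsLocalTM F T) : IsTM d n k T := by
  refine ⟨F, F, fun xq => ((fun w => if w ∈ F then (T (xq.1, xq.2, 0)).1 w else 0),
    (T (xq.1, xq.2, 0)).2), fun x y q hxy => ?_, fun x q v => ?_⟩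
  · have hxy' : Set.EqOn x y F := hxy
    simp only [hT.snd_eq_of_eqOn x y q hxy']
    congr 2
    funext w
    split_ifs with hw
    · exact hT.fst_eqOn_of_eqOn x y q hxy' hw
    · rfl
  · rw [hT.apply_eq]
    refine Prod.ext (funext fun u => ?_) (Prod.ext rfl (add_comm _ _))
    simp only [translate, shiftC_apply]
    split_ifs with hu
    · rfl
    · rw [hT.fst_apply_of_notMem _ _ _ hu, shiftC_apply, sub_neg_eq_add, sub_add_cancel]

def extendByZero [NeZero n] (F : Finset (Fin d → ℤ)) (p : F → Fin n) : (Fin d → ℤ) → Fin n :=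
  fun w => if h : w ∈ F then p ⟨w, h⟩ else 0

lemma eqOn_extendByZero [NeZero n] (F : Finset (Fin d → ℤ)) (x : (Fin d → ℤ) → Fin n) :
    Set.EqOn x (extendByZero F fun w => x w) F := by
  intro w hw
  simp [extendByZero, Finset.mem_coe.mp hw]

namespace IsLocalTM

variable {F G : Finset (Fin d → ℤ)} {T S : Head d n k → Head d n k}

lemma exists_finset_forall_disp_mem [NeZero n] (hT : IsLocalTM F T) :
    ∃ U : Finset (Fin d → ℤ), ∀ x q, (T (x, q, 0)).2.2 ∈ U := by
  refine ⟨Finset.univ.image fun pq : (F → Fin n) × Fin k =>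
    (T (extendByZero F pq.1, pq.2, 0)).2.2, fun x q => Finset.mem_image.mpr
      ⟨((fun w => x w), q), Finset.mem_univ _, ?_⟩⟩
  rw [hT.snd_eq_of_eqOn x _ q (eqOn_extendByZero F x)]

lemma comp (hS : IsLocalTM F S) (hT : IsLocalTM G T) {U : Finset (Fin d → ℤ)}
    (hU : ∀ x q, (S (x, q, 0)).2.2 ∈ U) :
    IsLocalTM (F ∪ U.biUnion fun u => G.image (u + ·)) (T ∘ S) := by
  set H := F ∪ U.biUnion fun u => G.image (u + ·)
  have mem_H : ∀ {x q w}, w - (S (x, q, 0)).2.2 ∈ G → w ∈ H := fun {x q w} hw =>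
    Finset.mem_union_right _ (Finset.mem_biUnion.mpr
      ⟨_, hU x q, Finset.mem_image.mpr ⟨_, hw, add_sub_cancel _ _⟩⟩)
  have hS_agree : ∀ x y q, Set.EqOn x y H → (S (x, q, 0)).2 = (S (y, q, 0)).2 ∧
      Set.EqOn (S (x, q, 0)).1 (S (y, q, 0)).1 H := by
    intro x y q hxy
    have hF : Set.EqOn x y F := hxy.mono fun w hw => Finset.mem_union_left _ hw
    refine ⟨hS.snd_eq_of_eqOn x y q hF, fun w hw => ?_⟩
    by_cases hwF : w ∈ F
    · exact hS.fst_eqOn_of_eqOn x y q hF hwF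
    · rw [hS.fst_apply_of_notMem _ _ _ hwF, hS.fst_apply_of_notMem _ _ _ hwF]
      exact hxy hw
  have hview : ∀ x y q, Set.EqOn x y H →
      Set.EqOn (shiftC (-(S (x, q, 0)).2.2) (S (x, q, 0)).1)
        (shiftC (-(S (x, q, 0)).2.2) (S (y, q, 0)).1) G := by
    intro x y q hxy w hw
    simp only [shiftC_apply, sub_neg_eq_add]
    exact (hS_agree x y q hxy).2 (mem_H (x := x) (q := q) (by simpa using hw))
  refine ⟨fun v p => by simp only [comp_apply, hS.map_translate, hT.map_translate], ?_, ?_, ?_⟩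
  · intro x q w hw
    have hwG : w - (S (x, q, 0)).2.2 ∉ G := fun h => hw (mem_H h)
    rw [comp_apply, hT.apply_eq]
    simp only [translate, shiftC_apply]
    rw [hT.fst_apply_of_notMem _ _ _ hwG, shiftC_apply, sub_neg_eq_add, sub_add_cancel,
      hS.fst_apply_of_notMem _ _ _ fun h => hw (Finset.mem_union_left _ h)]
  · intro x y q hxy
    have hS2 := (hS_agree x y q hxy).1
    have hT2 := hT.snd_eq_of_eqOn _ _ (S (x, q, 0)).2.1 (hview x y q hxy)
    simp only [comp_apply, hT.apply_eq (S (x, q, 0)), hT.apply_eq (S (y, q, 0)), translate,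
      ← hS2, hT2]
  · intro x y q hxy w hw
    obtain ⟨hS2, hS1⟩ := hS_agree x y q hxy
    have hT1 := hT.fst_eqOn_of_eqOn _ _ (S (x, q, 0)).2.1 (hview x y q hxy)
    simp only [comp_apply, hT.apply_eq (S (x, q, 0)), hT.apply_eq (S (y, q, 0)), translate,
      shiftC_apply, ← hS2]
    by_cases hwG : w - (S (x, q, 0)).2.2 ∈ G
    · exact hT1 hwG
    · rw [hT.fst_apply_of_notMem _ _ _ hwG, hT.fst_apply_of_notMem _ _ _ hwG]
      simpa [shiftC_apply] using hS1 hw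

end IsLocalTM

lemma isTM_comp [NeZero n] {T S : Head d n k → Head d n k} (hT : IsTM d n k T)
    (hS : IsTM d n k S) : IsTM d n k (T ∘ S) := by
  obtain ⟨F, hS⟩ := exists_isLocalTM_of_isTM hS
  obtain ⟨G, hT⟩ := exists_isLocalTM_of_isTM hT
  obtain ⟨U, hU⟩ := hS.exists_finset_forall_disp_mem
  exact (hS.comp hT hU).isTM

variable (d n k) in
def reversibleTM [NeZero n] : Subgroup (Equiv.Perm (Head d n k)) where
  carrier := RTMset d n k
  one_mem' := by
    have h : IsTM d n k id := IsLocalTM.isTM (F := ∅)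
      ⟨fun _ _ => rfl, fun _ _ _ _ => rfl, fun _ _ _ _ => rfl, fun _ _ _ _ _ hw => absurd hw
        (Finset.notMem_empty _)⟩
    exact ⟨h, h⟩
  mul_mem' he he' := ⟨(isTM_comp he.1 he'.1 :), (isTM_comp he'.2 he.2 :)⟩
  inv_mem' he := ⟨he.2, he.1⟩

abbrev Torus (d N : ℕ) : Type := Fin d → ZMod (N + 1)

def torusProj (N : ℕ) : (Fin d → ℤ) →+ Torus d N :=
  (Int.castAddHom (ZMod (N + 1))).compLeft (Fin d)

def periodize (N : ℕ) (y : Torus d N → Fin n) : (Fin d → ℤ) → Fin n :=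
  y ∘ torusProj N

lemma eventually_injOn_torusProj (A : Finset (Fin d → ℤ)) :
    ∀ᶠ N in atTop, Set.InjOn (torusProj N) (A : Set (Fin d → ℤ)) := by
  have hpair : ∀ a b : Fin d → ℤ, ∀ᶠ N in atTop, torusProj N a = torusProj N b → a = b := by
    intro a b
    by_cases hab : a = b
    · exact Eventually.of_forall fun _ _ => hab
    obtain ⟨i, hi⟩ := Function.ne_iff.mp hab
    filter_upwards [eventually_gt_atTop (a i - b i).natAbs] with N hN hproj
    refine absurd (Int.eq_zero_of_abs_lt_dvd (m := N + 1) ?_ ?_) (sub_ne_zero.mpr hi)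
    · have := congrFun hproj i
      simp only [torusProj, AddMonoidHom.compLeft_apply, comp_apply, Int.coe_castAddHom] at this
      rw [← dvd_neg, neg_sub]
      exact_mod_cast (ZMod.intCast_eq_intCast_iff_dvd_sub _ _ _).mp this
    · rw [Int.abs_eq_natAbs]
      omega
  have := (Filter.eventually_all_finset A).mpr fun a _ =>
    (Filter.eventually_all_finset A).mpr fun b _ => hpair a b
  exact this.mono fun N hN a ha b hb => hN a ha b hb

noncomputable def torusWrite (N : ℕ) (F : Finset (Fin d → ℤ)) (x : (Fin d → ℤ) → Fin n)
    (y : Torus d N → Fin n) : Torus d N → Fin n :=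
  fun c => if h : ∃ w ∈ F, torusProj N w = c then x h.choose else y c

lemma torusWrite_cases (N : ℕ) (F : Finset (Fin d → ℤ)) (x : (Fin d → ℤ) → Fin n)
    (y : Torus d N → Fin n) (c : Torus d N) :
    (∃ w ∈ F, torusProj N w = c ∧ torusWrite N F x y c = x w) ∨
      ((∀ w ∈ F, torusProj N w ≠ c) ∧ torusWrite N F x y c = y c) := by
  unfold torusWrite
  split_ifs with h
  · exact Or.inl ⟨h.choose, h.choose_spec.1, h.choose_spec.2, rfl⟩
  · exact Or.inr ⟨fun w hw hwc => h ⟨w, hw, hwc⟩, rfl⟩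

lemma torusWrite_torusProj {N : ℕ} {F : Finset (Fin d → ℤ)} {a : Fin d → ℤ}
    (hinj : Set.InjOn (torusProj N) (insert a (F : Set (Fin d → ℤ)))) (x : (Fin d → ℤ) → Fin n)
    (y : Torus d N → Fin n) :
    torusWrite N F x y (torusProj N a) = if a ∈ F then x a else periodize N y a := by
  have hinj' : ∀ w ∈ F, torusProj N w = torusProj N a → w = a := fun w hw h =>
    hinj (by simp [hw]) (by simp) h
  rcases torusWrite_cases N F x y (torusProj N a) with ⟨w, hw, hwa, hval⟩ | ⟨hne, hval⟩
  · obtain rfl := hinj' w hw hwa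
    rw [hval, if_pos hw]
  · rw [hval, if_neg fun ha => hne a ha rfl]
    rfl

/-- One step of `T` on the periodic configurations of period `N + 1`, with the head kept at the
origin: `T` is applied at the origin, its rewriting of the window `F` is copied into the torus, and
the torus is rotated along with the head. -/
noncomputable def torusMap (N : ℕ) (F : Finset (Fin d → ℤ)) (T : Head d n k → Head d n k)
    (z : (Torus d N → Fin n) × Fin k) : (Torus d N → Fin n) × Fin k :=
  (fun c => torusWrite N F (T (periodize N z.1, z.2, 0)).1 z.1
      (c + torusProj N (T (periodize N z.1, z.2, 0)).2.2),
    (T (periodize N z.1, z.2, 0)).2.1)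

namespace IsLocalTM

variable {F G : Finset (Fin d → ℤ)} {T T' : Head d n k → Head d n k}

lemma eventually_eqOn_periodize_torusMap [NeZero n] (hT : IsLocalTM F T)
    (G : Finset (Fin d → ℤ)) :
    ∀ᶠ N in atTop, ∀ z, Set.EqOn (periodize N (torusMap N F T z).1)
      (shiftC (-(T (periodize N z.1, z.2, 0)).2.2) (T (periodize N z.1, z.2, 0)).1) G := by
  obtain ⟨U, hU⟩ := hT.exists_finset_forall_disp_mem
  filter_upwards [eventually_injOn_torusProj (F ∪ U.biUnion fun u => G.image (· + u))]
    with N hN z a ha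
  set p := T (periodize N z.1, z.2, 0)
  have hinj : Set.InjOn (torusProj N) (insert (a + p.2.2) (F : Set (Fin d → ℤ))) := by
    refine hN.mono ?_
    intro w hw
    simp only [Set.mem_insert_iff, Finset.mem_coe] at hw
    rcases hw with rfl | hw
    · exact Finset.mem_union_right _ (Finset.mem_biUnion.mpr
        ⟨_, hU _ _, Finset.mem_image.mpr ⟨a, ha, rfl⟩⟩)
    · exact Finset.mem_union_left _ hw
  change torusWrite N F p.1 z.1 (torusProj N a + torusProj N p.2.2) = p.1 (a - -p.2.2)
  rw [← map_add, torusWrite_torusProj hinj, sub_neg_eq_add]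
  split_ifs with h
  · rfl
  · exact (hT.fst_apply_of_notMem _ _ _ h).symm

lemma eventually_leftInverse_torusMap [NeZero n] (hT : IsLocalTM F T) (hT' : IsLocalTM G T')
    (h : LeftInverse T' T) :
    ∀ᶠ N in atTop, LeftInverse (torusMap N G T') (torusMap N F T) := by
  filter_upwards [hT.eventually_eqOn_periodize_torusMap G] with N hN
  rintro ⟨y, q⟩
  set p := T (periodize N y, q, 0) with hp
  set z₁ := torusMap N F T (y, q)
  set P := T' (shiftC (-p.2.2) p.1, p.2.1, 0)
  have hP : translate p.2.2 P = (periodize N y, q, 0) := by rw [← hT'.apply_eq, hp, h]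
  have hP₂ : (T' (periodize N z₁.1, z₁.2, 0)).2 = P.2 := hT'.snd_eq_of_eqOn _ _ _ (hN (y, q))
  have hP₁ : Set.EqOn (T' (periodize N z₁.1, z₁.2, 0)).1 P.1 G :=
    hT'.fst_eqOn_of_eqOn _ _ _ (hN (y, q))
  have hq : P.2.1 = q := congrArg (·.2.1) hP
  have hu : P.2.2 = -p.2.2 := eq_neg_of_add_eq_zero_left (congrArg (·.2.2) hP)
  have hx : ∀ w, P.1 (w - p.2.2) = periodize N y w := fun w => congrFun (congrArg (·.1) hP) w
  refine Prod.ext (funext fun c => ?_) (by simp only [torusMap, hP₂, hq])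
  change torusWrite N G (T' (periodize N z₁.1, z₁.2, 0)).1 z₁.1
    (c + torusProj N (T' (periodize N z₁.1, z₁.2, 0)).2.2) = y c
  rw [hP₂, hu, map_neg, ← sub_eq_add_neg]
  -- A cell is either rewritten by `T'`, which restores it, or left alone by `T'`, in which case
  -- `T` did not change it either.
  rcases torusWrite_cases N G _ z₁.1 (c - torusProj N p.2.2) with
    ⟨w, hw, hwc, hval⟩ | ⟨hne, hval⟩
  · rw [hval, hP₁ hw, ← add_sub_cancel_right w p.2.2, hx]
    simp [periodize, hwc]
  · rw [hval]
    change torusWrite N F p.1 y (c - torusProj N p.2.2 + torusProj N p.2.2) = y c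
    rw [sub_add_cancel]
    rcases torusWrite_cases N F p.1 y c with ⟨w, -, rfl, hval'⟩ | ⟨-, hval'⟩
    · have hwG : w - p.2.2 ∉ G := fun hG => hne _ hG (map_sub _ _ _)
      rw [hval']
      change p.1 w = periodize N y w
      rw [← hx w, hT'.fst_apply_of_notMem _ _ _ hwG, shiftC_apply,
        sub_neg_eq_add, sub_add_cancel]
    · exact hval'

end IsLocalTM

def dispSum (N : ℕ) (T : Head d n k → Head d n k) : Fin d → ℤ :=
  ∑ z : (Torus d N → Fin n) × Fin k, (T (periodize N z.1, z.2, 0)).2.2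

namespace IsLocalTM

variable {F G H : Finset (Fin d → ℤ)} {T T' T'' : Head d n k → Head d n k}

/-- Since `torusMap N F T` is a bijection for large `N`, the displacements of `T'` after `T` add
up to the total displacement of `T'`. -/
lemma eventually_dispSum_comp [NeZero n] (hT : IsLocalTM F T) (hT' : IsLocalTM G T')
    (hT'' : IsLocalTM H T'') (h : LeftInverse T'' T) :
    ∀ᶠ N in atTop, dispSum N (T' ∘ T) = dispSum N T + dispSum N T' := by
  filter_upwards [hT.eventually_eqOn_periodize_torusMap G,
    hT.eventually_leftInverse_torusMap hT'' h] with N hN hinv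
  have hbij : Bijective (torusMap N F T) := Finite.injective_iff_bijective.mp hinv.injective
  have hstep : ∀ z : (Torus d N → Fin n) × Fin k, (T' (T (periodize N z.1, z.2, 0))).2.2 =
      (T (periodize N z.1, z.2, 0)).2.2 +
        (T' (periodize N (torusMap N F T z).1, (torusMap N F T z).2, 0)).2.2 := by
    intro z
    have hsnd := hT'.snd_eq_of_eqOn _ _ (T (periodize N z.1, z.2, 0)).2.1 (hN z)
    change _ = _ + (T' (periodize N (torusMap N F T z).1, (T (periodize N z.1, z.2, 0)).2.1, 0)).2.2
    rw [hT'.apply_eq, hsnd, add_comm]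
    rfl
  simp only [dispSum, comp_apply, hstep, Finset.sum_add_distrib,
    hbij.sum_comp fun z => (T' (periodize N z.1, z.2, 0)).2.2]

lemma eventually_dispSum_eq [NeZero n] (hT : IsLocalTM F T) :
    ∀ᶠ N in atTop, F.card ≤ Fintype.card (Torus d N) ∧ dispSum N T =
      n ^ (Fintype.card (Torus d N) - F.card) •
        ∑ p : F → Fin n, ∑ q, (T (extendByZero F p, q, 0)).2.2 := by
  filter_upwards [eventually_injOn_torusProj F] with N hN
  let j : F → Torus d N := fun a => torusProj N a
  have hj : Injective j := fun a b h => Subtype.ext (hN a.2 b.2 h)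
  refine ⟨by simpa using Fintype.card_le_of_injective j hj, ?_⟩
  calc dispSum N T = ∑ y : Torus d N → Fin n,
        (fun p => ∑ q, (T (extendByZero F p, q, 0)).2.2) (y ∘ j) := by
        rw [dispSum, Fintype.sum_prod_type]
        refine Finset.sum_congr rfl fun y _ => Finset.sum_congr rfl fun q _ => ?_
        rw [hT.snd_eq_of_eqOn _ _ q (eqOn_extendByZero F (periodize N y))]
        rfl
    _ = _ := by
        convert sum_comp_eq_card_pow_smul_sum hj
          (fun p => ∑ q, (T (extendByZero F p, q, 0)).2.2) using 3 <;> simp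

end IsLocalTM

noncomputable def torusMeanMove (N : ℕ) (T : Head d n k → Head d n k) : Fin d → ℚ :=
  ((n : ℚ) ^ Fintype.card (Torus d N) * k)⁻¹ • (Int.castAddHom ℚ).compLeft (Fin d) (dispSum N T)

lemma IsLocalTM.eventually_torusMeanMove_eq [NeZero n] {F : Finset (Fin d → ℤ)}
    {T : Head d n k → Head d n k} (hT : IsLocalTM F T) :
    ∀ᶠ N in atTop, torusMeanMove N T = ((n : ℚ) ^ F.card * k)⁻¹ •
      (Int.castAddHom ℚ).compLeft (Fin d)
        (∑ p : F → Fin n, ∑ q, (T (extendByZero F p, q, 0)).2.2) := by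
  filter_upwards [hT.eventually_dispSum_eq] with N ⟨hle, hsum⟩
  rw [torusMeanMove, hsum, map_nsmul, ← Nat.cast_smul_eq_nsmul ℚ, smul_smul, Nat.cast_pow,
    inv_pow_mul_mul_pow_sub (NeZero.ne _) _ hle]

/-- For a Turing machine, `torusMeanMove N T` is eventually constant, equal to the mean
displacement of one step from a uniformly random configuration and state
(`IsLocalTM.eventually_torusMeanMove_eq`). -/
noncomputable def avgMove (T : Head d n k → Head d n k) : Fin d → ℚ :=
  limUnder atTop fun N => torusMeanMove N T

lemma avgMove_eq_of_eventually {T : Head d n k → Head d n k} {a : Fin d → ℚ}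
    (h : ∀ᶠ N in atTop, torusMeanMove N T = a) : avgMove T = a :=
  (tendsto_const_nhds.congr' (h.mono fun _ hN => hN.symm)).limUnder_eq

lemma eventually_torusMeanMove_eq_avgMove [NeZero n] {T : Head d n k → Head d n k}
    (hT : IsTM d n k T) : ∀ᶠ N in atTop, torusMeanMove N T = avgMove T := by
  obtain ⟨F, hF⟩ := exists_isLocalTM_of_isTM hT
  rw [avgMove_eq_of_eventually hF.eventually_torusMeanMove_eq]
  exact hF.eventually_torusMeanMove_eq

lemma avgMove_mul [NeZero n] {e e' : Equiv.Perm (Head d n k)} (he : e ∈ RTMset d n k)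
    (he' : e' ∈ RTMset d n k) : avgMove ⇑(e * e') = avgMove ⇑e + avgMove ⇑e' := by
  obtain ⟨F, hF⟩ := exists_isLocalTM_of_isTM he.1
  obtain ⟨F', hF'⟩ := exists_isLocalTM_of_isTM he'.1
  obtain ⟨H, hH⟩ := exists_isLocalTM_of_isTM he'.2
  refine avgMove_eq_of_eventually ?_
  filter_upwards [hF'.eventually_dispSum_comp hF hH e'.symm_apply_apply,
    eventually_torusMeanMove_eq_avgMove he.1, eventually_torusMeanMove_eq_avgMove he'.1]
    with N hsum hmean hmean'
  rw [← hmean, ← hmean', torusMeanMove, Equiv.Perm.coe_mul, hsum, map_add, smul_add, add_comm]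
  rfl

lemma avgMove_one [NeZero n] : avgMove ⇑(1 : Equiv.Perm (Head d n k)) = 0 := by
  have h := avgMove_mul (one_mem (reversibleTM d n k)) (one_mem (reversibleTM d n k))
  rwa [mul_one, left_eq_add] at h

lemma avgMove_inv [NeZero n] {e : Equiv.Perm (Head d n k)} (he : e ∈ RTMset d n k) :
    avgMove ⇑e⁻¹ = -avgMove ⇑e := by
  have h := avgMove_mul (inv_mem (show e ∈ reversibleTM d n k from he)) he
  rw [inv_mul_cancel, avgMove_one] at h
  exact eq_neg_of_add_eq_zero_left h.symm

lemma avgMove_mem_of_mem_closure [NeZero n] {S : Set (Equiv.Perm (Head d n k))}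
    (hS : S ⊆ RTMset d n k) {A : AddSubgroup (Fin d → ℚ)} (hSA : ∀ s ∈ S, avgMove ⇑s ∈ A)
    {e : Equiv.Perm (Head d n k)} (he : e ∈ Subgroup.closure S) : avgMove ⇑e ∈ A := by
  have hle : Subgroup.closure S ≤ reversibleTM d n k := (Subgroup.closure_le _).mpr hS
  induction he using Subgroup.closure_induction with
  | mem s hs => exact hSA s hs
  | one => rw [avgMove_one]; exact zero_mem A
  | mul x y hx hy ihx ihy => rw [avgMove_mul (hle hx) (hle hy)]; exact add_mem ihx ihy
  | inv x hx ih => rw [avgMove_inv (hle hx)]; exact neg_mem ih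

section Slide

variable [NeZero n] (i : Fin d) (m : ℕ)

def BlankRun (x : (Fin d → ℤ) → Fin n) (v : Fin d → ℤ) : Prop :=
  ∀ j : Fin m, x (v + Pi.single i (j : ℤ)) = 0

instance (x : (Fin d → ℤ) → Fin n) (v : Fin d → ℤ) : Decidable (BlankRun i m x v) :=
  Fintype.decidableForallFintype

variable {i m} in
lemma blankRun_iff {x : (Fin d → ℤ) → Fin n} {v : Fin d → ℤ} :
    BlankRun i m x v ↔ ∀ t : ℤ, 0 ≤ t → t < m → x (v + Pi.single i t) = 0 := by
  refine ⟨fun h t ht0 htm => ?_, fun h j => h j (by positivity) (by exact_mod_cast j.2)⟩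
  simpa [Int.toNat_of_nonneg ht0] using h ⟨t.toNat, by omega⟩

variable {i m} in
lemma BlankRun.swap {a b s : ℤ}
    (hab : ∀ t : ℤ, 0 ≤ t → t < m → 0 ≤ Equiv.swap a b (s + t) ∧ Equiv.swap a b (s + t) < m)
    {x : (Fin d → ℤ) → Fin n} {v : Fin d → ℤ} (h : BlankRun i m x v) :
    BlankRun i m (x ∘ Equiv.swap (v + Pi.single i a) (v + Pi.single i b)) (v + Pi.single i s) := by
  have hinj : Injective fun t : ℤ => v + Pi.single i t :=
    (add_right_injective v).comp (Pi.single_injective i)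
  rw [blankRun_iff] at h ⊢
  intro t ht0 htm
  rw [comp_apply, add_assoc, ← Pi.single_add, hinj.swap_apply]
  exact h _ (hab t ht0 htm).1 (hab t ht0 htm).2

def slideStep (a b s : ℤ) (p : Head d n k) : Head d n k :=
  if BlankRun i m p.1 p.2.2 then
    (p.1 ∘ Equiv.swap (p.2.2 + Pi.single i a) (p.2.2 + Pi.single i b), p.2.1,
      p.2.2 + Pi.single i s)
  else p

lemma slideStep_leftInverse {a b s a' b' s' : ℤ} (ha : s + a' = a) (hb : s + b' = b)
    (hs : s + s' = 0)
    (hab : ∀ t : ℤ, 0 ≤ t → t < m → 0 ≤ Equiv.swap a b (s + t) ∧ Equiv.swap a b (s + t) < m) :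
    LeftInverse (slideStep (n := n) (k := k) i m a' b' s') (slideStep i m a b s) := by
  rintro ⟨x, q, v⟩
  by_cases hx : BlankRun i m x v
  · simp only [slideStep, if_pos hx, if_pos (hx.swap hab), add_assoc, ← Pi.single_add, ha, hb,
      hs, Pi.single_zero, add_zero]
    ext u <;> simp
  · simp [slideStep, hx]

variable (k) in
def slide : Equiv.Perm (Head d n k) where
  toFun := slideStep i m 0 m 1
  invFun := slideStep i m (-1) (m - 1) (-1)
  left_inv := slideStep_leftInverse i m (by ring) (by ring) (by ring) fun t ht0 htm => by
    rw [Equiv.swap_apply_def]; split_ifs <;> omega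
  right_inv := slideStep_leftInverse i m (by ring) (by ring) (by ring) fun t ht0 htm => by
    rw [Equiv.swap_apply_def]; split_ifs <;> omega

noncomputable def slideWindow (a b : ℤ) : Finset (Fin d → ℤ) :=
  (insert a (insert b (Finset.Ico 0 (m : ℤ)))).image (Pi.single i)

lemma isLocalTM_slideStep (a b s : ℤ) :
    IsLocalTM (slideWindow i m a b) (slideStep (n := n) (k := k) i m a b s) := by
  have mem : ∀ t ∈ insert a (insert b (Finset.Ico 0 (m : ℤ))),
      Pi.single i t ∈ slideWindow i m a b := fun t ht => Finset.mem_image_of_mem _ ht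
  have hblank : ∀ x y : (Fin d → ℤ) → Fin n, Set.EqOn x y (slideWindow i m a b) →
      (BlankRun i m x 0 ↔ BlankRun i m y 0) := fun x y hxy =>
    forall_congr' fun j => by
      rw [zero_add, hxy (mem _ (by simp))]
  have hswap : ∀ w ∈ slideWindow i m a b,
      Equiv.swap (Pi.single i a) (Pi.single i b) w ∈ slideWindow i m a b := by
    intro w hw
    rw [Equiv.swap_apply_def]
    split_ifs
    exacts [mem _ (by simp), mem _ (by simp), hw]
  refine ⟨?_, ?_, ?_, ?_⟩
  · rintro w ⟨x, q, v⟩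
    have hb : BlankRun i m (shiftC w x) (v + w) ↔ BlankRun i m x v := by
      simp only [BlankRun, shiftC_apply, add_right_comm v w, add_sub_cancel_right]
    by_cases h : BlankRun i m x v
    · simp only [slideStep, translate, hb, if_pos h]
      refine Prod.ext (funext fun u => ?_) (Prod.ext rfl (add_right_comm _ _ _))
      have := (add_left_injective w).swap_apply (v + Pi.single i a) (v + Pi.single i b) (u - w)
      simp only [add_right_comm v _ w, sub_add_cancel] at this
      simp only [comp_apply, shiftC_apply, this, add_sub_cancel_right]
    · simp [slideStep, translate, h, hb]
  · intro x q w hw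
    simp only [slideStep, zero_add]
    split_ifs
    · exact congrArg x (Equiv.swap_apply_of_ne_of_ne (fun h => hw (h ▸ mem _ (by simp)))
        (fun h => hw (h ▸ mem _ (by simp))))
    · rfl
  · intro x y q hxy
    simp only [slideStep, hblank x y hxy]
    split_ifs <;> rfl
  · intro x y q hxy w hw
    simp only [slideStep, hblank x y hxy, zero_add]
    split_ifs
    · exact hxy (hswap w hw)
    · exact hxy hw

lemma slide_mem_RTMset : slide k i m ∈ RTMset d n k :=
  ⟨(isLocalTM_slideStep i m 0 m 1).isTM, (isLocalTM_slideStep i m (-1) (m - 1) (-1)).isTM⟩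

lemma avgMove_slide [NeZero k] : avgMove ⇑(slide (n := n) k i m) = Pi.single i ((n : ℚ) ^ m)⁻¹ := by
  refine avgMove_eq_of_eventually ?_
  filter_upwards
    [eventually_injOn_torusProj (Finset.univ.image fun j : Fin m => Pi.single i (j : ℤ))] with N hN
  let j : Fin m → Torus d N := fun t => torusProj N (Pi.single i (t : ℤ))
  have hj : Injective j := fun a b hab => Fin.ext <| by
    exact_mod_cast Pi.single_injective i (hN (by simp) (by simp) hab)
  have hdisp : ∀ (y : Torus d N → Fin n) q, (slide k i m (periodize N y, q, 0)).2.2 =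
      if y ∘ j = 0 then Pi.single i 1 else 0 := by
    intro y q
    have hblank : BlankRun i m (periodize N y) 0 ↔ y ∘ j = 0 := by
      simp [BlankRun, funext_iff, periodize, j]
    simp only [slide, Equiv.coe_fn_mk, slideStep, hblank]
    split_ifs <;> simp
  have hsum : dispSum N ⇑(slide (n := n) k i m) =
      (k * n ^ (Fintype.card (Torus d N) - m)) • Pi.single i 1 := by
    rw [dispSum, Fintype.sum_prod_type]
    simp only [hdisp, Finset.sum_const, Finset.card_univ, Fintype.card_fin, ← Finset.smul_sum]
    rw [sum_comp_eq_card_pow_smul_sum hj fun p => if p = 0 then Pi.single i 1 else 0,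
      Fintype.sum_ite_eq',
      Fintype.card_fin, Fintype.card_fin, mul_smul]
  have hle : m ≤ Fintype.card (Torus d N) := by simpa using Fintype.card_le_of_injective j hj
  have hcast : (Int.castAddHom ℚ).compLeft (Fin d) (Pi.single i 1) = Pi.single i 1 := by
    ext t
    rcases eq_or_ne t i with rfl | ht
    · simp
    · simp [ht]
  rw [torusMeanMove, hsum, map_nsmul, hcast, ← Nat.cast_smul_eq_nsmul ℚ, smul_smul,
    ← Pi.single_smul, smul_eq_mul, mul_one]
  congr 1
  push_cast
  rw [mul_comm (k : ℚ), ← mul_assoc, inv_pow_mul_mul_pow_sub (NeZero.ne _) _ hle, mul_inv,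
    mul_assoc, inv_mul_cancel₀ (NeZero.ne _), mul_one]

end Slide

end MovingHeadTM

open MovingHeadTM in
/-- For `d ≥ 1`, `n ≥ 2`, `k ≥ 1`, the group `RTM(ℤ^d,n,k)` of
reversible moving-head Turing machines is not finitely generated: no finite subset
of `RTM(ℤ^d,n,k)` generates a subgroup containing all of `RTM(ℤ^d,n,k)`. -/
theorem RTM_not_finitelyGenerated
    (d n k : ℕ) (hd : 1 ≤ d) (hn : 2 ≤ n) (hk : 1 ≤ k) :
    ¬ ∃ S : Finset (Equiv.Perm (Head d n k)),
        (S : Set (Equiv.Perm (Head d n k))) ⊆ RTMset d n k ∧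
        ∀ e ∈ RTMset d n k, e ∈ Subgroup.closure (S : Set (Equiv.Perm (Head d n k))) := by
  have : NeZero n := ⟨by omega⟩
  have : NeZero k := ⟨by omega⟩
  rintro ⟨S, hSR, hgen⟩
  let i : Fin d := ⟨0, hd⟩
  obtain ⟨M, hM, hSM⟩ := exists_pos_forall_mem_zmultiples_inv
    (S.image fun s : Equiv.Perm (Head d n k) => avgMove ⇑s i)
  have hslide := avgMove_mem_of_mem_closure hSR
    (A := (AddSubgroup.zmultiples (M⁻¹ : ℚ)).comap (Pi.evalAddMonoidHom (fun _ => ℚ) i))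
    (fun s hs => hSM _ (Finset.mem_image_of_mem _ hs)) (hgen _ (slide_mem_RTMset i M))
  rw [AddSubgroup.mem_comap, Pi.evalAddMonoidHom_apply, avgMove_slide, Pi.single_eq_same]
    at hslide
  exact inv_pow_notMem_zmultiples_inv hn hM hslide
end

section
/- For all d ≥ 1, n ≥ 2 and k ≥ 1, the group RFA(ℤ^d,n,k) of reversible finite-state automata is not finitely generated. -/
/-- `RFA(ℤ^d,n,k)`: reversible machines that never change the tape. -/
def RFAset (d n k : ℕ) : Set (Equiv.Perm (Head d n k)) :=
  {e | e ∈ RTMset d n k ∧ ∀ (x : (Fin d → ℤ) → Fin n) (q : Fin k) (v : Fin d → ℤ),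
    (e (x, q, v)).1 = x}

/-!
For odd `m` let `x_m` be the tape carrying a `1` exactly on `mℤ^d`. A reversible finite
automaton commutes with the shift and never changes the tape, so over `x_m`, and over the blank
tape, it permutes the heads compatibly with translations by `mℤ^d`; it therefore permutes
`Q × (ℤ/m)^d`, and the product of the two signs is a character `χ_m` of the group.

Because the head only reads a finite window, once the window fits into a period the permutation
over `x_m` is the one over the blank tape composed with a copy of a fixed finite permutation (how
the machine reacts to a single `1`), so `χ_m(e)` is eventually constant in `m`. Hence `χ_m` and
`χ_{m'}` agree on any finitely generated subgroup, for suitable `m < m'`. The machine that, in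
state `0`, steps back and forth along `e₁` between `v` and `v + e₁` whenever
`x v = 1`, `x (v + e₁) = 0`, `x (v + m e₁) = 1` is a transposition over `x_m` but acts trivially
over `x_{m'}`, so it separates `χ_m` from `χ_{m'}`.
-/

open Equiv Function Filter

namespace Equiv.Perm

variable {α β : Type*}

def fibrewise (π : α → β) : Subgroup (Perm α) where
  carrier := {t | ∀ a b, π (t a) = π (t b) ↔ π a = π b}
  one_mem' _ _ := Iff.rfl
  mul_mem' hs ht a b := (hs _ _).trans (ht a b)
  inv_mem' {t} ht a b := by simpa using (ht (t⁻¹ a) (t⁻¹ b)).symm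

theorem mem_fibrewise_of_forall {π : α → β} {t : Perm α}
    (h : ∀ a b, π a = π b → π (t a) = π (t b))
    (h' : ∀ a b, π a = π b → π (t⁻¹ a) = π (t⁻¹ b)) : t ∈ fibrewise π :=
  fun a b => ⟨fun hab => by simpa using h' _ _ hab, h a b⟩

section Descend

variable {π : α → β} (hπ : Surjective π)

theorem apply_surjInv_of_mem_fibrewise {t : Perm α} (ht : t ∈ fibrewise π) (a : α) :
    π (t (surjInv hπ (π a))) = π (t a) :=
  (ht _ _).2 (surjInv_eq hπ _)

noncomputable def descend : fibrewise π →* Perm β where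
  toFun t :=
    { toFun := fun b => π (t.1 (surjInv hπ b))
      invFun := fun b => π (t.1⁻¹ (surjInv hπ b))
      left_inv := fun b => by
        obtain ⟨a, rfl⟩ := hπ b
        dsimp only
        rw [apply_surjInv_of_mem_fibrewise hπ t.2,
          apply_surjInv_of_mem_fibrewise hπ (inv_mem t.2)]
        simp
      right_inv := fun b => by
        obtain ⟨a, rfl⟩ := hπ b
        dsimp only
        rw [apply_surjInv_of_mem_fibrewise hπ (inv_mem t.2),
          apply_surjInv_of_mem_fibrewise hπ t.2]
        simp }
  map_one' := Perm.ext fun b => by simp [surjInv_eq hπ]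
  map_mul' s t := Perm.ext fun b => by
    obtain ⟨a, rfl⟩ := hπ b
    change π ((s * t).1 _) = π (s.1 (surjInv hπ (π (t.1 (surjInv hπ (π a))))))
    rw [apply_surjInv_of_mem_fibrewise hπ (s * t).2, apply_surjInv_of_mem_fibrewise hπ t.2,
      apply_surjInv_of_mem_fibrewise hπ s.2]
    rfl

theorem descend_apply (t : fibrewise π) (a : α) : descend hπ t (π a) = π (t.1 a) :=
  apply_surjInv_of_mem_fibrewise hπ t.2 a

end Descend

section Pushforward

variable {τ : Perm α} {B : Finset α}

theorem apply_mem_iff_of_forall_notMem (hτ : ∀ a ∉ B, τ a = a) (a : α) :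
    τ a ∈ B ↔ a ∈ B := by
  by_cases ha : a ∈ B
  · refine iff_of_true (by_contra fun h => ?_) ha
    exact h (by rwa [τ.injective (hτ _ h)])
  · rw [hτ a ha]

def pushforward [DecidableEq β] (τ : Perm α) (B : Finset α) (hτ : ∀ a ∉ B, τ a = a)
    (π : α → β) (hπ : Set.InjOn π B) : Perm β :=
  (τ.subtypePerm (apply_mem_iff_of_forall_notMem hτ)).viaFintypeEmbedding
    (⟨fun a => π a, fun a b h => Subtype.ext (hπ a.2 b.2 h)⟩ : {a // a ∈ B} ↪ β)

theorem pushforward_apply [DecidableEq β] (hτ : ∀ a ∉ B, τ a = a) {π : α → β}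
    (hπ : Set.InjOn π B) {a : α} (ha : ∀ b ∈ B, π b = π a → b = a) :
    pushforward τ B hτ π hπ (π a) = π (τ a) := by
  by_cases haB : a ∈ B
  · exact viaFintypeEmbedding_apply_image _ _ (⟨a, haB⟩ : {a // a ∈ B})
  · rw [hτ a haB]
    refine viaFintypeEmbedding_apply_notMem_range _ _ ?_
    rintro ⟨b, hb⟩
    exact haB (ha b b.2 hb ▸ b.2)

theorem sign_pushforward [DecidableEq α] [DecidableEq β] [Fintype β] (hτ : ∀ a ∉ B, τ a = a)
    {π : α → β} (hπ : Set.InjOn π B) :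
    sign (pushforward τ B hτ π hπ) = sign (τ.subtypePerm (apply_mem_iff_of_forall_notMem hτ)) :=
  viaFintypeEmbedding_sign _ _

end Pushforward

end Equiv.Perm

namespace MovingHead

variable {d n k : ℕ}

section Lattice

def reduce (d m : ℕ) : (Fin d → ℤ) →+ (Fin d → ZMod m) :=
  (Int.castAddHom (ZMod m)).compLeft (Fin d)

theorem reduce_apply (m : ℕ) (v : Fin d → ℤ) (i : Fin d) : reduce d m v i = (v i : ZMod m) := rfl

theorem reduce_single (m : ℕ) (i : Fin d) (z : ℤ) :
    reduce d m (Pi.single i z) = Pi.single i (z : ZMod m) := by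
  ext j
  by_cases h : j = i
  · subst h; simp [reduce_apply]
  · simp [reduce_apply, h]

def centered (d m : ℕ) : Set (Fin d → ℤ) := {v | ∀ i, 2 * |v i| < m}

theorem neg_mem_centered {m : ℕ} {v : Fin d → ℤ} : -v ∈ centered d m ↔ v ∈ centered d m := by
  simp [centered]

theorem reduce_injOn_centered (m : ℕ) : Set.InjOn (reduce d m) (centered d m) := by
  intro v hv w hw h
  ext i
  have hdvd : (m : ℤ) ∣ w i - v i :=
    (ZMod.intCast_eq_intCast_iff_dvd_sub _ _ m).1 (congrFun h i)
  have hlt : |w i - v i| < m := by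
    linarith [abs_sub (w i) (v i), hv i, hw i]
  linarith [Int.eq_zero_of_abs_lt_dvd hdvd hlt]

theorem reduce_surjOn_centered {m : ℕ} (hm : Odd m) :
    Set.SurjOn (reduce d m) (centered d m) Set.univ := by
  have : NeZero m := ⟨hm.pos.ne'⟩
  intro a _
  refine ⟨fun i => (a i).valMinAbs, fun i => ?_, funext fun i => ZMod.coe_valMinAbs _⟩
  have h := ZMod.natAbs_valMinAbs_le (a i)
  change 2 * |(a i).valMinAbs| < m
  obtain ⟨r, rfl⟩ := hm
  rw [Int.abs_eq_natAbs]
  omega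

def reduceHead (m : ℕ) : Fin k × (Fin d → ℤ) → Fin k × (Fin d → ZMod m) :=
  Prod.map id (reduce d m)

theorem reduceHead_surjective (m : ℕ) : Surjective (reduceHead (k := k) (d := d) m) :=
  surjective_id.prodMap ZMod.intCast_surjective.comp_left

end Lattice

section Equivariant

theorem shiftC_shiftC {A : Type*} (v w : Fin d → ℤ) (x : (Fin d → ℤ) → A) :
    shiftC v (shiftC w x) = shiftC (v + w) x := by
  funext u
  simp [shiftC, sub_sub]

theorem shiftC_neg_apply {A : Type*} (v : Fin d → ℤ) (x : (Fin d → ℤ) → A) (u : Fin d → ℤ) :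
    shiftC (-v) x u = x (u + v) := by
  simp [shiftC]

def headShift (w : Fin d → ℤ) (p : Head d n k) : Head d n k := (shiftC w p.1, p.2.1, p.2.2 + w)

def equivariantFA (d n k : ℕ) : Subgroup (Perm (Head d n k)) where
  carrier := {e | (∀ p, (e p).1 = p.1) ∧ ∀ w p, e (headShift w p) = headShift w (e p)}
  one_mem' := ⟨fun _ => rfl, fun _ _ => rfl⟩
  mul_mem' := by
    rintro a b ⟨ha, ha'⟩ ⟨hb, hb'⟩
    exact ⟨fun p => (ha _).trans (hb p), fun w p => by simp only [Perm.mul_apply, hb', ha']⟩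
  inv_mem' := by
    rintro a ⟨ha, ha'⟩
    refine ⟨fun p => by simpa using (ha (a⁻¹ p)).symm, fun w p => ?_⟩
    rw [Perm.inv_eq_iff_eq, ha']
    simp

theorem IsTM.snd_apply_shiftC {T : Head d n k → Head d n k} (hT : IsTM d n k T)
    (x : (Fin d → ℤ) → Fin n) (q : Fin k) (v w : Fin d → ℤ) :
    (T (shiftC w x, q, v + w)).2 = ((T (x, q, v)).2.1, (T (x, q, v)).2.2 + w) := by
  obtain ⟨_, _, f, -, hTf⟩ := hT
  rw [hTf, hTf, shiftC_shiftC, show -(v + w) + w = -v by abel, add_right_comm]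

theorem mem_equivariantFA_of_mem_RFAset {e : Perm (Head d n k)} (he : e ∈ RFAset d n k) :
    e ∈ equivariantFA d n k := by
  refine ⟨fun p => he.2 _ _ _, fun w ⟨x, q, v⟩ => Prod.ext ?_ ?_⟩
  · simp only [headShift, he.2]
  · exact IsTM.snd_apply_shiftC he.1.1 x q v w

theorem apply_eq_mk_snd {e : Perm (Head d n k)} (he : e ∈ equivariantFA d n k)
    (x : (Fin d → ℤ) → Fin n) (p : Fin k × (Fin d → ℤ)) : e (x, p) = (x, (e (x, p)).2) :=
  Prod.ext (he.1 _) rfl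

def fiberPerm (x : (Fin d → ℤ) → Fin n) : equivariantFA d n k →* Perm (Fin k × (Fin d → ℤ)) where
  toFun e :=
    { toFun := fun p => (e.1 (x, p)).2
      invFun := fun p => (e.1⁻¹ (x, p)).2
      left_inv := fun p => by
        change (e.1⁻¹ (x, (e.1 (x, p)).2)).2 = p
        rw [← apply_eq_mk_snd e.2]
        simp
      right_inv := fun p => by
        change (e.1 (x, (e.1⁻¹ (x, p)).2)).2 = p
        rw [← apply_eq_mk_snd (inv_mem e.2)]
        simp }
  map_one' := rfl
  map_mul' a b := Perm.ext fun p => by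
    change (a.1 (b.1 (x, p))).2 = (a.1 (x, (b.1 (x, p)).2)).2
    rw [← apply_eq_mk_snd b.2]

theorem fiberPerm_apply (x : (Fin d → ℤ) → Fin n) (e : equivariantFA d n k)
    (p : Fin k × (Fin d → ℤ)) : fiberPerm x e p = (e.1 (x, p)).2 := rfl

theorem fiberPerm_add (e : equivariantFA d n k) {x : (Fin d → ℤ) → Fin n} {w : Fin d → ℤ}
    (hx : shiftC w x = x) (q : Fin k) (v : Fin d → ℤ) :
    fiberPerm x e (q, v + w) = ((fiberPerm x e (q, v)).1, (fiberPerm x e (q, v)).2 + w) := by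
  have h := congrArg Prod.snd (e.2.2 w (x, q, v))
  rwa [headShift, hx] at h

theorem shiftC_comp_reduce {m : ℕ} (y : (Fin d → ZMod m) → Fin n) {w : Fin d → ℤ}
    (hw : reduce d m w = 0) : shiftC w (y ∘ reduce d m) = y ∘ reduce d m := by
  funext u
  simp [shiftC, hw]

theorem reduceHead_fiberPerm_eq {m : ℕ} (y : (Fin d → ZMod m) → Fin n) (e : equivariantFA d n k)
    {a b : Fin k × (Fin d → ℤ)} (h : reduceHead m a = reduceHead m b) :
    reduceHead m (fiberPerm (y ∘ reduce d m) e a) =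
      reduceHead m (fiberPerm (y ∘ reduce d m) e b) := by
  obtain ⟨q, v⟩ := a
  obtain ⟨q', v'⟩ := b
  simp only [reduceHead, Prod.map, id, Prod.mk.injEq] at h
  obtain ⟨rfl, h⟩ := h
  have hw : reduce d m (v' - v) = 0 := by rw [map_sub, h, sub_self]
  rw [show v' = v + (v' - v) by abel, fiberPerm_add e (shiftC_comp_reduce y hw)]
  simp [reduceHead, Prod.map, hw]

theorem fiberPerm_mem_fibrewise {m : ℕ} (y : (Fin d → ZMod m) → Fin n)
    (e : equivariantFA d n k) : fiberPerm (y ∘ reduce d m) e ∈ Perm.fibrewise (reduceHead m) :=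
  Perm.mem_fibrewise_of_forall (fun _ _ => reduceHead_fiberPerm_eq y e)
    (fun _ _ h => by simpa only [← map_inv] using reduceHead_fiberPerm_eq y e⁻¹ h)

noncomputable def periodicPerm (m : ℕ) (y : (Fin d → ZMod m) → Fin n) :
    equivariantFA d n k →* Perm (Fin k × (Fin d → ZMod m)) :=
  (Perm.descend (reduceHead_surjective m)).comp
    ((fiberPerm (y ∘ reduce d m)).codRestrict _ (fiberPerm_mem_fibrewise y))

theorem periodicPerm_apply {m : ℕ} (y : (Fin d → ZMod m) → Fin n) (e : equivariantFA d n k)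
    (p : Fin k × (Fin d → ℤ)) :
    periodicPerm m y e (reduceHead m p) = reduceHead m (fiberPerm (y ∘ reduce d m) e p) :=
  Perm.descend_apply _ _ p

theorem periodicPerm_eq_one {m : ℕ} {y : (Fin d → ZMod m) → Fin n} {e : equivariantFA d n k}
    (h : ∀ p, fiberPerm (y ∘ reduce d m) e p = p) : periodicPerm m y e = 1 :=
  Perm.ext fun z => by
    obtain ⟨p, rfl⟩ := reduceHead_surjective m z
    rw [periodicPerm_apply, h, Perm.one_apply]

/-- Odd moduli `2 * j + 1`, so that `centered` is a set of representatives modulo the period. -/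
noncomputable def periodicSign [NeZero n] (j : ℕ) : equivariantFA d n k →* ℤˣ :=
  Perm.sign.comp (periodicPerm (2 * j + 1) (Pi.single 0 1)) *
    Perm.sign.comp (periodicPerm (2 * j + 1) 0)

end Equivariant

section Locality

def HasWindow (T : Head d n k → Head d n k) (F : Finset (Fin d → ℤ)) : Prop :=
  ∀ x y q v, (∀ u ∈ F, x (u + v) = y (u + v)) → (T (x, q, v)).2 = (T (y, q, v)).2

theorem IsTM.exists_hasWindow {T : Head d n k → Head d n k} (hT : IsTM d n k T) :
    ∃ F, HasWindow T F := by
  obtain ⟨F, _, f, hf, hTf⟩ := hT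
  refine ⟨F, fun x y q v h => ?_⟩
  rw [hTf, hTf, hf (shiftC (-v) x) (shiftC (-v) y) q fun u hu => by
    simpa [shiftC_neg_apply] using h u hu]

variable [NeZero n] (e : equivariantFA d n k) {F : Finset (Fin d → ℤ)}

def defect : Perm (Fin k × (Fin d → ℤ)) := fiberPerm (Pi.single 0 1) e * (fiberPerm 0 e)⁻¹

open scoped Pointwise in
def defectSupport (F : Finset (Fin d → ℤ)) : Finset (Fin k × (Fin d → ℤ)) :=
  (Finset.univ ×ˢ (-F)).map (fiberPerm 0 e).toEmbedding

theorem fiberPerm_single_eq_fiberPerm_zero (hF : HasWindow e.1 F) {p : Fin k × (Fin d → ℤ)}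
    (hp : -p.2 ∉ F) : fiberPerm (Pi.single 0 1) e p = fiberPerm 0 e p := by
  obtain ⟨q, v⟩ := p
  refine hF _ _ q v fun u hu => Pi.single_eq_of_ne (fun huv => hp ?_) _
  rwa [← eq_neg_of_add_eq_zero_left huv]

theorem defect_apply_of_notMem (hF : HasWindow e.1 F) {r : Fin k × (Fin d → ℤ)}
    (hr : r ∉ defectSupport e F) : defect e r = r := by
  obtain ⟨p, rfl⟩ := (fiberPerm 0 e).surjective r
  have hp : -p.2 ∉ F := fun h =>
    hr (Finset.mem_map_of_mem _ (by simpa [Finset.mem_neg] using h))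
  simp [defect, fiberPerm_single_eq_fiberPerm_zero e hF hp]

theorem injOn_fiberPerm_zero_image_centered (m : ℕ) :
    Set.InjOn (reduceHead m) (fiberPerm 0 e '' {p | p.2 ∈ centered d m}) := by
  have hρ : fiberPerm 0 e ∈ Perm.fibrewise (reduceHead (k := k) m) := by
    simpa using fiberPerm_mem_fibrewise (0 : (Fin d → ZMod m) → Fin n) e
  rintro _ ⟨a, ha, rfl⟩ _ ⟨b, hb, rfl⟩ h
  obtain ⟨h1, h2⟩ := Prod.mk.inj ((hρ a b).1 h)
  exact congrArg _ (Prod.ext h1 (reduce_injOn_centered m ha hb h2))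

theorem defectSupport_subset {m : ℕ} (hFm : ↑F ⊆ centered d m) :
    ↑(defectSupport e F) ⊆ fiberPerm 0 e '' {p | p.2 ∈ centered d m} := by
  intro r hr
  obtain ⟨p, hp, rfl⟩ := Finset.mem_map.1 hr
  refine ⟨p, ?_, rfl⟩
  simp only [Finset.mem_product, Finset.mem_neg] at hp
  obtain ⟨-, u, hu, hpu⟩ := hp
  rw [Set.mem_ofPred_eq, ← hpu]
  exact neg_mem_centered.2 (hFm hu)

theorem fiberPerm_periodic_eq_fiberPerm_single {m : ℕ} (hF : HasWindow e.1 F)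
    (hFm : ↑F ⊆ centered d m) {p : Fin k × (Fin d → ℤ)} (hp : p.2 ∈ centered d m) :
    fiberPerm (Pi.single 0 1 ∘ reduce d m) e p = fiberPerm (Pi.single 0 1) e p := by
  obtain ⟨q, v⟩ := p
  change v ∈ centered d m at hp
  refine hF _ _ q v fun u hu => ?_
  have key : reduce d m (u + v) = 0 ↔ u + v = 0 := by
    refine ⟨fun h => ?_, fun h => by rw [h, map_zero]⟩
    rw [map_add] at h
    have := reduce_injOn_centered m hp (neg_mem_centered.2 (hFm hu))
      (by rw [map_neg]; exact eq_neg_of_add_eq_zero_right h)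
    rw [this, add_neg_cancel]
  simp only [Function.comp, Pi.single_apply, key]

theorem periodicPerm_single_eq_pushforward_mul {m : ℕ} (hF : HasWindow e.1 F) (hm : Odd m)
    (hFm : ↑F ⊆ centered d m) :
    periodicPerm m (Pi.single 0 1) e =
      (defect e).pushforward (defectSupport e F) (fun _ => defect_apply_of_notMem e hF)
        (reduceHead m) ((injOn_fiberPerm_zero_image_centered e m).mono
          (defectSupport_subset e hFm)) * periodicPerm m 0 e := by
  refine Perm.ext fun z => ?_
  obtain ⟨v, hv, hz⟩ := reduce_surjOn_centered (d := d) hm (Set.mem_univ z.2)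
  obtain ⟨q, a⟩ := z
  rw [show (q, a) = reduceHead m (q, v) by simp [reduceHead, hz]]
  have ha : ∀ b ∈ defectSupport e F, reduceHead m b = reduceHead m (fiberPerm 0 e (q, v)) →
      b = fiberPerm 0 e (q, v) := fun b hb h =>
    injOn_fiberPerm_zero_image_centered e m (defectSupport_subset e hFm hb)
      (Set.mem_image_of_mem _ hv) h
  rw [Perm.mul_apply, periodicPerm_apply, periodicPerm_apply, Pi.zero_comp,
    Perm.pushforward_apply _ _ ha, fiberPerm_periodic_eq_fiberPerm_single e hF hFm hv, defect,
    Perm.mul_apply, Perm.coe_inv, symm_apply_apply]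

theorem periodicSign_eq (hF : HasWindow e.1 F) {j : ℕ} (hFj : ↑F ⊆ centered d (2 * j + 1)) :
    periodicSign j e = Perm.sign ((defect e).subtypePerm
      (Perm.apply_mem_iff_of_forall_notMem fun _ => defect_apply_of_notMem e hF)) := by
  rw [periodicSign, MonoidHom.mul_apply, MonoidHom.comp_apply, MonoidHom.comp_apply,
    periodicPerm_single_eq_pushforward_mul e hF (odd_two_mul_add_one j) hFj, map_mul, mul_assoc,
    Int.units_mul_self, mul_one, Perm.sign_pushforward]

theorem eventually_subset_centered (F : Finset (Fin d → ℤ)) :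
    ∀ᶠ j in atTop, ↑F ⊆ centered d (2 * j + 1) := by
  refine ((eventually_all_finset F).2 fun u _ => eventually_all.2 fun i =>
    (eventually_ge_atTop (|u i|.toNat)).mono fun j hj => ?_).mono fun j h u hu => h u hu
  have := Int.self_le_toNat |u i|
  push_cast
  omega

theorem HasWindow.exists_eventually_periodicSign_eq (hF : HasWindow e.1 F) :
    ∃ ε : ℤˣ, ∀ᶠ j in atTop, periodicSign j e = ε :=
  ⟨_, (eventually_subset_centered F).mono fun _ => periodicSign_eq e hF⟩

end Locality

theorem eventually_periodicSign_succ_eq [NeZero n] (S : Finset (Perm (Head d n k)))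
    (hS : ↑S ⊆ RFAset d n k) :
    ∀ᶠ j in atTop, ∀ e ∈ Subgroup.closure (S : Set (Perm (Head d n k))),
      ∀ he : e ∈ equivariantFA d n k, periodicSign j ⟨e, he⟩ = periodicSign (j + 1) ⟨e, he⟩ := by
  have hSG : ∀ g ∈ S, g ∈ equivariantFA d n k := fun g hg =>
    mem_equivariantFA_of_mem_RFAset (hS hg)
  have hgen : ∀ g ∈ S, ∀ᶠ j in atTop, ∀ hg : g ∈ equivariantFA d n k,
      periodicSign j ⟨g, hg⟩ = periodicSign (j + 1) ⟨g, hg⟩ := fun g hg => by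
    obtain ⟨F, hF⟩ := IsTM.exists_hasWindow (hS hg).1.1
    obtain ⟨ε, hε⟩ := HasWindow.exists_eventually_periodicSign_eq ⟨g, hSG g hg⟩ hF
    filter_upwards [hε, (tendsto_add_atTop_nat 1).eventually hε] with j hj hj' _
    exact hj.trans hj'.symm
  filter_upwards [(eventually_all_finset S).2 hgen] with j hj e he heG
  have hle : Subgroup.closure (S : Set (Perm (Head d n k))) ≤
      ((periodicSign j).eqLocus (periodicSign (j + 1))).map (equivariantFA d n k).subtype :=
    (Subgroup.closure_le _).2 fun g hg => ⟨⟨g, hSG g hg⟩, hj g hg _, rfl⟩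
  obtain ⟨⟨e, _⟩, he', rfl⟩ := hle he
  exact he'

section Witness

def localFA (g : ((Fin d → ℤ) → Fin n) × Fin k → Fin k × (Fin d → ℤ)) (p : Head d n k) :
    Head d n k :=
  (p.1, (g (shiftC (-p.2.2) p.1, p.2.1)).1, p.2.2 + (g (shiftC (-p.2.2) p.1, p.2.1)).2)

theorem isTM_localFA [NeZero n] {g : ((Fin d → ℤ) → Fin n) × Fin k → Fin k × (Fin d → ℤ)}
    (F : Finset (Fin d → ℤ)) (hg : ∀ x y q, (∀ u ∈ F, x u = y u) → g (x, q) = g (y, q)) :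
    IsTM d n k (localFA g) :=
  ⟨F, ∅, fun p => (0, g p), fun x y q h => congrArg (Prod.mk 0) (hg x y q h),
    fun x q v => by simp [localFA]⟩

variable [NeZero n] (M : ℕ) (i : Fin d)

def Marked (x : (Fin d → ℤ) → Fin n) (v : Fin d → ℤ) : Prop :=
  x v = 1 ∧ x (v + Pi.single i 1) = 0 ∧ x (v + Pi.single i (M : ℤ)) = 1

instance (x : (Fin d → ℤ) → Fin n) (v : Fin d → ℤ) : Decidable (Marked M i x v) := by
  unfold Marked; infer_instance

variable {M i}

theorem marked_shiftC_neg {x : (Fin d → ℤ) → Fin n} {v w : Fin d → ℤ} :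
    Marked M i (shiftC (-v) x) w ↔ Marked M i x (w + v) := by
  simp only [Marked, shiftC_neg_apply, add_right_comm w _ v]

variable [NeZero k] (M i)

def witnessRule (p : ((Fin d → ℤ) → Fin n) × Fin k) : Fin k × (Fin d → ℤ) :=
  (p.2, if p.2 = 0 ∧ Marked M i p.1 0 then Pi.single i 1
    else if p.2 = 0 ∧ Marked M i p.1 (-Pi.single i 1) then -Pi.single i 1 else 0)

variable {M i}

theorem localFA_witnessRule_apply (x : (Fin d → ℤ) → Fin n) (q : Fin k) (v : Fin d → ℤ) :
    localFA (witnessRule M i) (x, q, v) = (x, q, v +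
      if q = 0 ∧ Marked M i x v then Pi.single i 1
      else if q = 0 ∧ Marked M i x (v - Pi.single i 1) then -Pi.single i 1 else 0) := by
  simp [localFA, witnessRule, marked_shiftC_neg, neg_add_eq_sub]

theorem isTM_witness : IsTM d n k (localFA (witnessRule M i)) := by
  refine isTM_localFA {0, Pi.single i 1, Pi.single i (M : ℤ), -Pi.single i 1,
    -Pi.single i 1 + Pi.single i (M : ℤ)} fun x y q h => ?_
  simp [witnessRule, Marked, h]

theorem witness_involutive (h1 : (1 : Fin n) ≠ 0) :
    Involutive (localFA (d := d) (n := n) (k := k) (witnessRule M i)) := by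
  rintro ⟨x, q, v⟩
  rw [localFA_witnessRule_apply x q v]
  split_ifs with hm hm'
  · have hnext : ¬ Marked M i x (v + Pi.single i 1) := fun h => h1 (h.1.symm.trans hm.2.2.1)
    rw [localFA_witnessRule_apply, if_neg (fun h => hnext h.2),
      if_pos (by rwa [add_sub_cancel_right]), add_neg_cancel_right]
  · rw [← sub_eq_add_neg, localFA_witnessRule_apply, if_pos hm', sub_add_cancel]
  · rw [add_zero, localFA_witnessRule_apply, if_neg hm, if_neg hm', add_zero]

variable (M i)

def witnessPerm (h1 : (1 : Fin n) ≠ 0) : Perm (Head d n k) :=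
  Involutive.toPerm _ (witness_involutive (M := M) (i := i) h1)

theorem witnessPerm_mem_RFAset (h1 : (1 : Fin n) ≠ 0) :
    witnessPerm (k := k) M i h1 ∈ RFAset d n k :=
  ⟨⟨isTM_witness, by rw [witnessPerm, Involutive.toPerm_symm]; exact isTM_witness⟩,
    fun x q v => by simp [witnessPerm, localFA_witnessRule_apply]⟩

variable {M i} {m : ℕ}

theorem marked_periodic_iff (h1 : (1 : Fin n) ≠ 0) {v : Fin d → ℤ} :
    Marked M i (Pi.single 0 (1 : Fin n) ∘ reduce d m) v ↔
      reduce d m v = 0 ∧ (1 : ZMod m) ≠ 0 ∧ ((M : ℤ) : ZMod m) = 0 := by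
  by_cases hv : reduce d m v = 0 <;>
    simp [Marked, Pi.single_apply, reduce_single, h1, h1.symm, hv]

theorem not_marked_zero (h1 : (1 : Fin n) ≠ 0) (v : Fin d → ℤ) :
    ¬ Marked M i ((0 : (Fin d → ZMod m) → Fin n) ∘ reduce d m) v :=
  fun h => h1 h.1.symm

theorem periodicPerm_witness_eq_one (h1 : (1 : Fin n) ≠ 0) {y : (Fin d → ZMod m) → Fin n}
    (hy : ∀ v, ¬ Marked M i (y ∘ reduce d m) v) (h : witnessPerm M i h1 ∈ equivariantFA d n k) :
    periodicPerm m y ⟨witnessPerm M i h1, h⟩ = 1 :=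
  periodicPerm_eq_one fun ⟨q, v⟩ => by
    simp [fiberPerm_apply, witnessPerm, localFA_witnessRule_apply, hy]

theorem periodicPerm_witness_self (h1 : (1 : Fin n) ≠ 0) (hm : 2 ≤ m)
    (h : witnessPerm m i h1 ∈ equivariantFA d n k) :
    periodicPerm m (Pi.single 0 1) ⟨witnessPerm m i h1, h⟩ =
      Equiv.swap (0, 0) (0, Pi.single i 1) := by
  have : Fact (1 < m) := ⟨hm⟩
  have hmk : ∀ v, Marked m i (Pi.single 0 (1 : Fin n) ∘ reduce d m) v ↔ reduce d m v = 0 := by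
    simp [marked_periodic_iff h1]
  refine Perm.ext fun z => ?_
  obtain ⟨⟨q, v⟩, rfl⟩ := reduceHead_surjective m z
  rw [periodicPerm_apply, fiberPerm_apply]
  simp only [witnessPerm, Involutive.coe_toPerm, localFA_witnessRule_apply, hmk, map_sub,
    sub_eq_zero, reduce_single, Int.cast_one]
  simp only [reduceHead, Prod.map_apply, id]
  split_ifs with ha hb
  · obtain ⟨rfl, hv⟩ := ha
    simp [hv, reduce_single]
  · obtain ⟨rfl, hv⟩ := hb
    simp [hv, reduce_single]
  · rw [add_zero, swap_apply_of_ne_of_ne (fun h => ha (Prod.mk.inj h))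
      (fun h => hb (Prod.mk.inj h))]

theorem periodicSign_witness_self (h1 : (1 : Fin n) ≠ 0) {j : ℕ} (hj : 0 < j)
    (h : witnessPerm (2 * j + 1) i h1 ∈ equivariantFA d n k) :
    periodicSign j ⟨witnessPerm (2 * j + 1) i h1, h⟩ = -1 := by
  have : Fact (1 < 2 * j + 1) := ⟨by omega⟩
  rw [periodicSign, MonoidHom.mul_apply, MonoidHom.comp_apply, MonoidHom.comp_apply,
    periodicPerm_witness_self h1 (by omega), periodicPerm_witness_eq_one h1 (not_marked_zero h1),
    map_one, mul_one, Perm.sign_swap]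
  exact fun h => one_ne_zero (Pi.single_eq_zero_iff.1 (Prod.mk.inj h).2.symm)

theorem periodicSign_witness_of_lt (h1 : (1 : Fin n) ≠ 0) {j j' : ℕ} (hjj : j < j')
    (h : witnessPerm (2 * j + 1) i h1 ∈ equivariantFA d n k) :
    periodicSign j' ⟨witnessPerm (2 * j + 1) i h1, h⟩ = 1 := by
  have hndvd : ¬ (2 * j' + 1) ∣ (2 * j + 1) := fun hd => by
    have := Nat.le_of_dvd (by omega) hd
    omega
  rw [periodicSign, MonoidHom.mul_apply, MonoidHom.comp_apply, MonoidHom.comp_apply,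
    periodicPerm_witness_eq_one h1 (not_marked_zero h1), periodicPerm_witness_eq_one h1,
    map_one, mul_one]
  intro v hv
  rw [marked_periodic_iff h1, ZMod.intCast_zmod_eq_zero_iff_dvd] at hv
  exact hndvd (by exact_mod_cast hv.2.2)

end Witness

end MovingHead

open MovingHead

/-- For `d ≥ 1`, `n ≥ 2`, `k ≥ 1`, the group `RFA(ℤ^d,n,k)` of
reversible finite-state automata is not finitely generated: no finite subset of
`RFA(ℤ^d,n,k)` generates a subgroup containing all of `RFA(ℤ^d,n,k)`. -/
theorem RFA_not_finitelyGenerated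
    (d n k : ℕ) (hd : 1 ≤ d) (hn : 2 ≤ n) (hk : 1 ≤ k) :
    ¬ ∃ S : Finset (Equiv.Perm (Head d n k)),
        (S : Set (Equiv.Perm (Head d n k))) ⊆ RFAset d n k ∧
        ∀ e ∈ RFAset d n k, e ∈ Subgroup.closure (S : Set (Equiv.Perm (Head d n k))) := by
  rintro ⟨S, hSsub, hgen⟩
  have : NeZero n := ⟨by omega⟩
  have : NeZero k := ⟨by omega⟩
  have h1 : (1 : Fin n) ≠ 0 := fun h => by simp [Fin.ext_iff, Nat.mod_eq_of_lt hn] at h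
  obtain ⟨j, hS, hj⟩ :=
    ((eventually_periodicSign_succ_eq S hSsub).and (eventually_gt_atTop 0)).exists
  have hJ := witnessPerm_mem_RFAset (k := k) (2 * j + 1) ⟨0, hd⟩ h1
  have hJG := mem_equivariantFA_of_mem_RFAset hJ
  have hsign := hS _ (hgen _ hJ) hJG
  rw [periodicSign_witness_self h1 hj, periodicSign_witness_of_lt h1 j.lt_succ_self] at hsign
  exact absurd hsign (by decide)
end
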